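/- arXiv:1902.05860 — 9 statements merged into one kernel-verified Lean document; each statement's English description precedes it below -/
import Mathlib

section
/- Let G be a connected simple graph on a finite vertex set V with |V| = n, let dist denote graph distance, and let c ∈ V be a vertex with eccentricity at most r (that is, dist(c, v) ≤ r for every v ∈ V). Let p be a probability distribution on V and let (X_t)_{t≥0} be i.i.d. V-valued random variables each with law p. Define the capture time T = min{ t ≥ 1 : t ≥ dist(c, X_0) and X_t = X_0 } (with T = ∞ if no such t exists). Then E[T] ≤ n + r. -/
open MeasureTheory ProbabilityTheory
open scoped ENNReal

/-!
Write `w v = dist c v - 1 ≤ r` for the number of turns the cop needs before it can capture at `v`.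
Given `X₀ = v`, the later positions are independent Bernoulli trials for hitting `v`, so
`P(T > k, X₀ = v) = p v (1 - p v) ^ (k - w v)`. Summing these tails gives
`E[T] ≤ ∑ v, p v (w v + (p v)⁻¹) ≤ ∑ v, (p v r + 1) = r + n`; a vertex with `p v = 0` contributes
nothing since `0 * ⊤ = 0` in `ℝ≥0∞`.
-/

theorem ENNReal.le_tsum_ite_natCast_lt (x : ℝ≥0∞) :
    x ≤ ∑' k : ℕ, if (k : ℝ≥0∞) < x then 1 else 0 := by
  rcases eq_or_ne x ⊤ with rfl | hx
  · simp
  calc x ≤ ⌈x.toNNReal⌉₊ := by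
        rw [← ENNReal.coe_toNNReal hx]; exact_mod_cast Nat.le_ceil _
    _ = ∑ k ∈ Finset.range ⌈x.toNNReal⌉₊, if (k : ℝ≥0∞) < x then 1 else 0 := by
        rw [Finset.sum_congr rfl fun k hk => if_pos ?_]
        · simp
        rw [← ENNReal.coe_toNNReal hx]
        exact_mod_cast Nat.lt_ceil.mp (Finset.mem_range.mp hk)
    _ ≤ _ := ENNReal.sum_le_tsum _

theorem MeasureTheory.lintegral_le_tsum_measure_natCast_lt {Ω : Type*} [MeasurableSpace Ω]
    (μ : Measure Ω) {f : Ω → ℝ≥0∞} (hf : ∀ k : ℕ, MeasurableSet {ω | (k : ℝ≥0∞) < f ω}) :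
    ∫⁻ ω, f ω ∂μ ≤ ∑' k : ℕ, μ {ω | (k : ℝ≥0∞) < f ω} :=
  calc ∫⁻ ω, f ω ∂μ ≤ ∫⁻ ω, ∑' k : ℕ, {ω | (k : ℝ≥0∞) < f ω}.indicator 1 ω ∂μ := by
        refine lintegral_mono fun ω => (ENNReal.le_tsum_ite_natCast_lt _).trans_eq ?_
        simp [Set.indicator_apply]
    _ = ∑' k : ℕ, μ {ω | (k : ℝ≥0∞) < f ω} := by
        rw [lintegral_tsum fun k => (measurable_one.indicator (hf k)).aemeasurable]
        simp_rw [lintegral_indicator_one (hf _)]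

theorem ENNReal.natCast_lt_sInf_natCast_iff {P : ℕ → Prop} {k : ℕ} :
    (k : ℝ≥0∞) < sInf {τ : ℝ≥0∞ | ∃ t : ℕ, τ = t ∧ P t} ↔ ∀ t, P t → k < t := by
  constructor
  · intro h t ht
    have : (k : ℝ≥0∞) < t := h.trans_le (sInf_le ⟨t, rfl, ht⟩)
    exact_mod_cast this
  · intro h
    calc (k : ℝ≥0∞) < (k + 1 : ℕ) := by exact_mod_cast k.lt_succ_self
      _ ≤ _ := le_sInf <| by rintro _ ⟨t, rfl, ht⟩; exact_mod_cast h t ht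

theorem ENNReal.tsum_pow_tsub (q : ℝ≥0∞) (w : ℕ) :
    ∑' k : ℕ, q ^ (k - w) = w + (1 - q)⁻¹ := by
  rw [← ENNReal.summable.sum_add_tsum_nat_add' (k := w), ← ENNReal.tsum_geometric]
  congr 1
  · rw [Finset.sum_congr rfl fun k hk => by rw [Nat.sub_eq_zero_of_le (Finset.mem_range.mp hk).le]]
    simp
  · simp

section DelayedReturnTime

variable {V Ω : Type*}

noncomputable def delayedReturnTime (X : ℕ → Ω → V) (w : V → ℕ) (ω : Ω) : ℝ≥0∞ :=
  sInf {τ : ℝ≥0∞ | ∃ t : ℕ, τ = t ∧ w (X 0 ω) < t ∧ X t ω = X 0 ω}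

theorem setOf_natCast_lt_delayedReturnTime (X : ℕ → Ω → V) (w : V → ℕ) (k : ℕ) :
    {ω | (k : ℝ≥0∞) < delayedReturnTime X w ω} =
      ⋃ v, X 0 ⁻¹' {v} ∩ ⋂ t ∈ Finset.Ioc (w v) k, X t ⁻¹' {v}ᶜ := by
  ext ω
  simp only [delayedReturnTime, ENNReal.natCast_lt_sInf_natCast_iff, Set.mem_ofPred_eq,
    Set.mem_iUnion, Set.mem_inter_iff, Set.mem_preimage, Set.mem_singleton_iff,
    Set.mem_iInter, Set.mem_compl_iff, Finset.mem_Ioc, exists_eq_left']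
  refine ⟨fun h t ht heq => ?_, fun h t ht => ?_⟩
  · exact absurd (h t ⟨ht.1, heq⟩) (by omega)
  · by_contra hk
    exact h t ⟨ht.1, by omega⟩ ht.2

variable [MeasurableSpace V] [MeasurableSingletonClass V] [MeasurableSpace Ω] {μ : Measure Ω}
  {X : ℕ → Ω → V} {p : PMF V}

theorem measurableSet_preimage_inter_biInter_preimage_compl (hmeas : ∀ t, Measurable (X t))
    (s : Finset ℕ) (v : V) : MeasurableSet (X 0 ⁻¹' {v} ∩ ⋂ t ∈ s, X t ⁻¹' {v}ᶜ) :=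
  (hmeas 0 (measurableSet_singleton v)).inter <|
    Finset.measurableSet_biInter _ fun t _ => hmeas t (measurableSet_singleton v).compl

theorem measure_preimage_inter_biInter_preimage_compl (hmeas : ∀ t, Measurable (X t))
    (hindep : iIndepFun X μ) (hlaw : ∀ t, μ.map (X t) = p.toMeasure)
    {s : Finset ℕ} (hs : 0 ∉ s) (v : V) :
    μ (X 0 ⁻¹' {v} ∩ ⋂ t ∈ s, X t ⁻¹' {v}ᶜ) = p v * (1 - p v) ^ s.card := by
  have hX : ∀ t B, MeasurableSet B → μ (X t ⁻¹' B) = p.toMeasure B := fun t B hB => by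
    rw [← Measure.map_apply (hmeas t) hB, hlaw]
  have hsing : p.toMeasure {v} = p v := p.toMeasure_apply_singleton v (measurableSet_singleton v)
  set B : ℕ → Set V := Function.update (fun _ => {v}ᶜ) 0 {v}
  have hB : ∀ t ∈ s, B t = {v}ᶜ := fun t ht =>
    Function.update_of_ne (ne_of_mem_of_not_mem ht hs) _ _
  have hB0 : B 0 = {v} := Function.update_self _ _ _
  calc μ (X 0 ⁻¹' {v} ∩ ⋂ t ∈ s, X t ⁻¹' {v}ᶜ) = μ (⋂ t ∈ insert 0 s, X t ⁻¹' B t) := by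
        rw [Finset.set_biInter_insert, hB0, Set.iInter₂_congr fun t ht => by rw [← hB t ht]]
    _ = ∏ t ∈ insert 0 s, μ (X t ⁻¹' B t) :=
        hindep.measure_inter_preimage_eq_mul _ fun t ht => by
          rcases Finset.mem_insert.1 ht with rfl | ht
          · exact hB0 ▸ measurableSet_singleton v
          · exact hB t ht ▸ (measurableSet_singleton v).compl
    _ = p v * (1 - p v) ^ s.card := by
        rw [Finset.prod_insert hs, Finset.prod_congr rfl fun t ht => by
            rw [hB t ht, hX _ _ (measurableSet_singleton v).compl,
              prob_compl_eq_one_sub (measurableSet_singleton v), hsing],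
          Finset.prod_const, hB0, hX _ _ (measurableSet_singleton v), hsing]

variable [Fintype V]

theorem measurableSet_natCast_lt_delayedReturnTime (hmeas : ∀ t, Measurable (X t))
    (w : V → ℕ) (k : ℕ) : MeasurableSet {ω | (k : ℝ≥0∞) < delayedReturnTime X w ω} := by
  rw [setOf_natCast_lt_delayedReturnTime]
  exact .iUnion fun v => measurableSet_preimage_inter_biInter_preimage_compl hmeas _ v

theorem measure_natCast_lt_delayedReturnTime (hmeas : ∀ t, Measurable (X t))
    (hindep : iIndepFun X μ) (hlaw : ∀ t, μ.map (X t) = p.toMeasure) (w : V → ℕ) (k : ℕ) :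
    μ {ω | (k : ℝ≥0∞) < delayedReturnTime X w ω} = ∑ v, p v * (1 - p v) ^ (k - w v) := by
  rw [setOf_natCast_lt_delayedReturnTime, measure_iUnion, tsum_fintype]
  · refine Finset.sum_congr rfl fun v _ => ?_
    rw [measure_preimage_inter_biInter_preimage_compl hmeas hindep hlaw (by simp), Nat.card_Ioc]
  · intro v v' hv
    exact ((Set.disjoint_singleton.2 hv).preimage (X 0)).mono Set.inter_subset_left
      Set.inter_subset_left
  · exact fun v => measurableSet_preimage_inter_biInter_preimage_compl hmeas _ v

theorem lintegral_delayedReturnTime_le (hmeas : ∀ t, Measurable (X t))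
    (hindep : iIndepFun X μ) (hlaw : ∀ t, μ.map (X t) = p.toMeasure) (w : V → ℕ) :
    ∫⁻ ω, delayedReturnTime X w ω ∂μ ≤ ∑ v, p v * (w v + (p v)⁻¹) :=
  calc ∫⁻ ω, delayedReturnTime X w ω ∂μ
      ≤ ∑' k : ℕ, μ {ω | (k : ℝ≥0∞) < delayedReturnTime X w ω} :=
        lintegral_le_tsum_measure_natCast_lt μ
          (measurableSet_natCast_lt_delayedReturnTime hmeas w)
    _ = ∑ v, p v * (w v + (p v)⁻¹) := by
        simp_rw [measure_natCast_lt_delayedReturnTime hmeas hindep hlaw]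
        rw [Summable.tsum_finsetSum fun v _ => ENNReal.summable]
        refine Finset.sum_congr rfl fun v _ => ?_
        rw [ENNReal.tsum_mul_left, ENNReal.tsum_pow_tsub,
          ENNReal.sub_sub_cancel ENNReal.one_ne_top (p.coe_le_one v)]

end DelayedReturnTime

theorem wmw1_expected_capture_time_le_general
    {V : Type*} [Fintype V]
    [MeasurableSpace V] [MeasurableSingletonClass V]
    (G : SimpleGraph V)
    (n : ℕ) (hn : Fintype.card V = n)
    (c : V) (r : ℕ) (hr : ∀ v : V, G.dist c v ≤ r)
    (p : PMF V)
    {Ω : Type*} [MeasurableSpace Ω] (μ : Measure Ω)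
    (X : ℕ → Ω → V)
    (hmeas : ∀ t, Measurable (X t))
    (hindep : iIndepFun X μ)
    (hlaw : ∀ t, μ.map (X t) = p.toMeasure)
    (T : Ω → ℝ≥0∞)
    (hT : ∀ ω, T ω = sInf {τ : ℝ≥0∞ | ∃ t : ℕ, τ = t ∧ 1 ≤ t ∧
      G.dist c (X 0 ω) ≤ t ∧ X t ω = X 0 ω}) :
    ∫⁻ ω, T ω ∂μ ≤ (n : ℝ≥0∞) + r := by
  -- Truncated subtraction makes `dist c v - 1 < t` say exactly `1 ≤ t ∧ dist c v ≤ t`.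
  have hT' : T = delayedReturnTime X (fun v => G.dist c v - 1) := by
    ext ω
    rw [hT, delayedReturnTime]
    congr 1
    ext τ
    refine exists_congr fun t => and_congr_right fun _ => ?_
    rw [← and_assoc]
    exact and_congr_left fun _ => by omega
  calc ∫⁻ ω, T ω ∂μ ≤ ∑ v, p v * (((G.dist c v - 1 : ℕ) : ℝ≥0∞) + (p v)⁻¹) :=
        hT' ▸ lintegral_delayedReturnTime_le hmeas hindep hlaw _
    _ ≤ ∑ v, (p v * r + 1) := by
        gcongr with v
        rw [mul_add]
        gcongr
        · exact_mod_cast (G.dist c v).sub_le 1 |>.trans (hr v)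
        · exact ENNReal.mul_inv_le_one (p v)
    _ = n + r := by
        rw [Finset.sum_add_distrib, ← Finset.sum_mul, ← tsum_fintype (L := .unconditional _),
          p.tsum_coe]
        simp [hn, add_comm]

/-- Watch-Move-Wait against the 1-observed gambler on a connected
`n`-vertex graph whose start vertex `c` has eccentricity at most `r`:
the expected capture time is at most `n + r`. -/
theorem wmw1_expected_capture_time_le
    {V : Type*} [Fintype V] [DecidableEq V]
    [MeasurableSpace V] [MeasurableSingletonClass V]
    (G : SimpleGraph V) (hG : G.Connected)
    (n : ℕ) (hn : Fintype.card V = n)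
    (c : V) (r : ℕ) (hr : ∀ v : V, G.dist c v ≤ r)
    (p : PMF V)
    {Ω : Type*} [MeasurableSpace Ω] (μ : Measure Ω) [IsProbabilityMeasure μ]
    (X : ℕ → Ω → V)
    (hmeas : ∀ t, Measurable (X t))
    (hindep : iIndepFun X μ)
    (hlaw : ∀ t, μ.map (X t) = p.toMeasure)
    (T : Ω → ℝ≥0∞)
    (hT : ∀ ω, T ω = sInf {τ : ℝ≥0∞ | ∃ t : ℕ, τ = t ∧ 1 ≤ t ∧
      G.dist c (X 0 ω) ≤ t ∧ X t ω = X 0 ω}) :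
    ∫⁻ ω, T ω ∂μ ≤ (n : ℝ≥0∞) + r :=
  wmw1_expected_capture_time_le_general G n hn c r hr p μ X hmeas hindep hlaw T hT
end

section
/- Let n ≥ 2 and let G be the star on n vertices: a simple graph on vertex set V with a center u adjacent to each of the other n − 1 vertices and no other edges; let dist denote graph distance. For every probability distribution p on V and every i.i.d. sequence (X_t)_{t≥0} with law p, the capture time T = min{ t ≥ 1 : t ≥ dist(u, X_0) and X_t = X_0 } satisfies E[T] ≤ n + 1. -/
/-!
The cop reaches `X₀` by time `1`, since every vertex of the star is within distance `1` of the
center, so the capture time is the first return time `τ` of the i.i.d. sequence to `X₀`. Given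
`X₀ = v`, the events `X_t ≠ v` for `1 ≤ t ≤ k` are independent, so
`P(τ > k) = ∑ᵥ p(v) (1 - p(v))ᵏ`. Summing the tails, each vertex contributes
`∑ₖ p(v) (1 - p(v))ᵏ ≤ 1` to `E[τ] = ∑ₖ P(τ > k)`, so `E[τ] ≤ n`.
-/

open MeasureTheory ProbabilityTheory
open scoped ENNReal

theorem SimpleGraph.dist_le_one_of_forall_adj {V : Type*} {G : SimpleGraph V} {u : V}
    (hadj : ∀ v, v ≠ u → G.Adj u v) (v : V) : G.dist u v ≤ 1 := by
  by_cases hv : v = u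
  · simp [hv]
  · exact (SimpleGraph.dist_eq_one_iff_adj.2 (hadj v hv)).le

theorem ENNReal.tsum_mul_one_sub_pow_le_one {a : ℝ≥0∞} (ha : a ≤ 1) :
    ∑' k : ℕ, a * (1 - a) ^ k ≤ 1 := by
  rw [ENNReal.tsum_mul_left, ENNReal.tsum_geometric, ENNReal.sub_sub_cancel ENNReal.one_ne_top ha]
  exact ENNReal.mul_inv_le_one a

noncomputable def firstSuccessTime (P : ℕ → Prop) : ℝ≥0∞ :=
  sInf {τ : ℝ≥0∞ | ∃ t : ℕ, τ = t ∧ 1 ≤ t ∧ P t}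

theorem firstSuccessTime_le_tsum_indicator {α : Type*} (P : ℕ → α → Prop) (x : α) :
    firstSuccessTime (P · x) ≤
      ∑' k : ℕ, {y | ∀ t ∈ Finset.Icc 1 k, ¬ P t y}.indicator 1 x := by
  classical
  by_cases hex : ∃ t, 1 ≤ t ∧ P t x
  · obtain ⟨hm1, hmP⟩ := Nat.find_spec hex
    have hfail : ∀ k < Nat.find hex, ∀ t ∈ Finset.Icc 1 k, ¬ P t x := fun k hk t ht hPt =>
      Nat.find_min hex ((Finset.mem_Icc.1 ht).2.trans_lt hk) ⟨(Finset.mem_Icc.1 ht).1, hPt⟩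
    calc firstSuccessTime (P · x) ≤ (Nat.find hex : ℝ≥0∞) := sInf_le (by exact ⟨_, rfl, hm1, hmP⟩)
      _ = ∑ k ∈ Finset.range (Nat.find hex), {y | ∀ t ∈ Finset.Icc 1 k, ¬ P t y}.indicator 1 x := by
          rw [Finset.sum_congr rfl fun k hk => Set.indicator_of_mem
            (s := {y | ∀ t ∈ Finset.Icc 1 k, ¬ P t y}) (hfail k (Finset.mem_range.1 hk)) 1]
          simp
      _ ≤ _ := ENNReal.sum_le_tsum _
  · push Not at hex
    have hfail : ∀ k, ∀ t ∈ Finset.Icc 1 k, ¬ P t x := fun k t ht => hex t (Finset.mem_Icc.1 ht).1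
    rw [tsum_congr fun k => Set.indicator_of_mem (s := {y | ∀ t ∈ Finset.Icc 1 k, ¬ P t y})
      (hfail k) (1 : α → ℝ≥0∞)]
    simp

theorem lintegral_firstSuccessTime_le_tsum_measure {Ω : Type*} [MeasurableSpace Ω] (μ : Measure Ω)
    (P : ℕ → Ω → Prop) (hP : ∀ t, MeasurableSet {ω | P t ω}) :
    ∫⁻ ω, firstSuccessTime (P · ω) ∂μ ≤ ∑' k : ℕ, μ {ω | ∀ t ∈ Finset.Icc 1 k, ¬ P t ω} := by
  set A : ℕ → Set Ω := fun k => {ω | ∀ t ∈ Finset.Icc 1 k, ¬ P t ω}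
  have hA : ∀ k, MeasurableSet (A k) := fun k => by
    simp only [A, Set.ofPred_forall]
    exact Finset.measurableSet_biInter _ fun t _ => (hP t).compl
  calc ∫⁻ ω, firstSuccessTime (P · ω) ∂μ ≤ ∫⁻ ω, ∑' k, (A k).indicator 1 ω ∂μ :=
        lintegral_mono (firstSuccessTime_le_tsum_indicator P)
    _ = ∑' k, ∫⁻ ω, (A k).indicator 1 ω ∂μ :=
        lintegral_tsum fun k => (measurable_one.indicator (hA k)).aemeasurable
    _ = ∑' k, μ (A k) := tsum_congr fun k => lintegral_indicator_one (hA k)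

section IID

variable {Ω V : Type*} [MeasurableSpace Ω] [MeasurableSpace V] [MeasurableSingletonClass V]
  {μ : Measure Ω} {X : ℕ → Ω → V} {p : PMF V}

theorem measure_eq_and_forall_ne_eq (hmeas : ∀ t, Measurable (X t)) (hindep : iIndepFun X μ)
    (hlaw : ∀ t, μ.map (X t) = p.toMeasure) (v : V) (k : ℕ) :
    μ {ω | X 0 ω = v ∧ ∀ t ∈ Finset.Icc 1 k, X t ω ≠ v} = p v * (1 - p v) ^ k := by
  set S : ℕ → Set V := fun i => if i = 0 then {v} else {v}ᶜ
  have hS : ∀ i, MeasurableSet (S i) := fun i => by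
    by_cases hi : i = 0 <;> simp [S, hi]
  have hlawS : ∀ i, μ (X i ⁻¹' S i) = if i = 0 then p v else 1 - p v := fun i => by
    have hv := p.toMeasure_apply_singleton v (measurableSet_singleton v)
    rw [← Measure.map_apply (hmeas i) (hS i), hlaw]
    by_cases hi : i = 0
    · simp [S, hi, hv]
    · simp only [S, if_neg hi]
      rw [measure_compl (measurableSet_singleton v) (measure_ne_top _ _), measure_univ, hv]
  have hset : {ω | X 0 ω = v ∧ ∀ t ∈ Finset.Icc 1 k, X t ω ≠ v} =
      ⋂ i ∈ Finset.range (k + 1), X i ⁻¹' S i := by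
    ext ω
    simp only [S, Set.mem_ofPred_eq, Set.mem_iInter, Finset.mem_range, Finset.mem_Icc]
    constructor
    · rintro ⟨h0, hne⟩ i hi
      rcases Nat.eq_zero_or_pos i with rfl | hpos
      · simpa using h0
      · simpa [hpos.ne'] using hne i ⟨hpos, by omega⟩
    · intro h
      refine ⟨by simpa using h 0 (by omega), fun t ht => ?_⟩
      simpa [show t ≠ 0 by omega] using h t (by omega)
  rw [hset, hindep.meas_biInter fun i _ => ⟨S i, hS i, rfl⟩,
    Finset.prod_congr rfl fun i _ => hlawS i, Finset.prod_range_succ']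
  simp [mul_comm]

theorem measure_forall_ne_eq_sum [Fintype V] (hmeas : ∀ t, Measurable (X t))
    (hindep : iIndepFun X μ) (hlaw : ∀ t, μ.map (X t) = p.toMeasure) (k : ℕ) :
    μ {ω | ∀ t ∈ Finset.Icc 1 k, X t ω ≠ X 0 ω} = ∑ v, p v * (1 - p v) ^ k := by
  set A := {ω | ∀ t ∈ Finset.Icc 1 k, X t ω ≠ X 0 ω}
  have hfiber : ∀ v, MeasurableSet (X 0 ⁻¹' {v}) := fun v => hmeas 0 (measurableSet_singleton v)
  calc μ A = μ.restrict A (X 0 ⁻¹' ↑(Finset.univ : Finset V)) := by simp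
    _ = ∑ v, μ (X 0 ⁻¹' {v} ∩ A) := by
        rw [← sum_measure_preimage_singleton _ fun v _ => hfiber v]
        exact Finset.sum_congr rfl fun v _ => Measure.restrict_apply (hfiber v)
    _ = ∑ v, p v * (1 - p v) ^ k := Finset.sum_congr rfl fun v _ => by
        rw [← measure_eq_and_forall_ne_eq hmeas hindep hlaw v k]
        congr 1
        ext ω
        simp only [A, Set.mem_inter_iff, Set.mem_preimage, Set.mem_singleton_iff,
          Set.mem_ofPred_eq]
        constructor <;> rintro ⟨rfl, h⟩ <;> exact ⟨rfl, h⟩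

end IID

theorem wmw1_star_expected_capture_time_le_general
    {V : Type*} [Fintype V]
    [MeasurableSpace V] [MeasurableSingletonClass V]
    (n : ℕ)
    (G : SimpleGraph V) (hn : Fintype.card V = n)
    (u : V) (hstar : ∀ a b : V, G.Adj a b ↔ ((a = u ∧ b ≠ u) ∨ (b = u ∧ a ≠ u)))
    (p : PMF V)
    {Ω : Type*} [MeasurableSpace Ω] (μ : Measure Ω)
    (X : ℕ → Ω → V)
    (hmeas : ∀ t, Measurable (X t))
    (hindep : iIndepFun X μ)
    (hlaw : ∀ t, μ.map (X t) = p.toMeasure)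
    (T : Ω → ℝ≥0∞)
    (hT : ∀ ω, T ω = sInf {τ : ℝ≥0∞ | ∃ t : ℕ, τ = t ∧ 1 ≤ t ∧
      G.dist u (X 0 ω) ≤ t ∧ X t ω = X 0 ω}) :
    ∫⁻ ω, T ω ∂μ ≤ (n : ℝ≥0∞) + 1 := by
  have hdist := SimpleGraph.dist_le_one_of_forall_adj fun v hv => (hstar u v).2 (Or.inl ⟨rfl, hv⟩)
  have hT_eq_return : ∀ ω, T ω = firstSuccessTime (X · ω = X 0 ω) := by
    intro ω
    rw [hT, firstSuccessTime]
    congr 1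
    ext τ
    exact exists_congr fun t => and_congr_right fun _ => and_congr_right fun h1 =>
      and_iff_right ((hdist _).trans (by exact_mod_cast h1))
  calc ∫⁻ ω, T ω ∂μ ≤ ∑' k : ℕ, μ {ω | ∀ t ∈ Finset.Icc 1 k, X t ω ≠ X 0 ω} := by
        simp_rw [hT_eq_return]
        exact lintegral_firstSuccessTime_le_tsum_measure μ _ fun t =>
          measurableSet_eq_fun (hmeas t) (hmeas 0)
    _ = ∑' k : ℕ, ∑ v, p v * (1 - p v) ^ k :=
        tsum_congr (measure_forall_ne_eq_sum hmeas hindep hlaw)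
    _ = ∑ v, ∑' k : ℕ, p v * (1 - p v) ^ k := Summable.tsum_finsetSum fun _ _ => ENNReal.summable
    _ ≤ ∑ _v : V, 1 :=
        Finset.sum_le_sum fun v _ => ENNReal.tsum_mul_one_sub_pow_le_one (p.coe_le_one v)
    _ = n := by simp [hn]
    _ ≤ n + 1 := le_self_add

/-- Watch-Move-Wait against the 1-observed gambler on the
`n`-vertex star (center `u`) has expected capture time at most `n + 1`. -/
theorem wmw1_star_expected_capture_time_le
    {V : Type*} [Fintype V] [DecidableEq V]
    [MeasurableSpace V] [MeasurableSingletonClass V]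
    (n : ℕ) (hn2 : 2 ≤ n)
    (G : SimpleGraph V) (hn : Fintype.card V = n)
    (u : V) (hstar : ∀ a b : V, G.Adj a b ↔ ((a = u ∧ b ≠ u) ∨ (b = u ∧ a ≠ u)))
    (p : PMF V)
    {Ω : Type*} [MeasurableSpace Ω] (μ : Measure Ω) [IsProbabilityMeasure μ]
    (X : ℕ → Ω → V)
    (hmeas : ∀ t, Measurable (X t))
    (hindep : iIndepFun X μ)
    (hlaw : ∀ t, μ.map (X t) = p.toMeasure)
    (T : Ω → ℝ≥0∞)
    (hT : ∀ ω, T ω = sInf {τ : ℝ≥0∞ | ∃ t : ℕ, τ = t ∧ 1 ≤ t ∧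
      G.dist u (X 0 ω) ≤ t ∧ X t ω = X 0 ω}) :
    ∫⁻ ω, T ω ∂μ ≤ (n : ℝ≥0∞) + 1 :=
  wmw1_star_expected_capture_time_le_general n G hn u hstar p μ X hmeas hindep hlaw T hT
end

section
/- Let T be a tree (a connected acyclic simple graph) on a finite vertex set V with |V| = n, and let x be an integer with 2 ≤ x < n. Then there exist a subset S ⊆ V and a vertex v ∈ S such that x < |S| ≤ 2x − 1, the subgraph of T induced on S is connected, and the subgraph of T induced on (V ∖ S) ∪ {v} is connected. -/
/-!
Root the tree at `r` and let `v` minimise the size of its subtree among the vertices with more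
than `x` descendants. Then every child subtree of `v` has at most `x` vertices and together they
have at least `x`, so adding child subtrees one at a time until the total reaches `x` overshoots
by at most `x - 2` (a child subtree of exactly `x` vertices is taken alone). The limb formed by `v`
and the chosen subtrees is connected through `v`, and the rest of the tree together with `v` is
connected because the path from any of its vertices to `r` never enters a chosen subtree.
-/

open Finset

theorem Finset.exists_subset_le_sum_le_two_mul_sub_two {ι : Type*} (f : ι → ℕ) {x : ℕ}
    (hx : 2 ≤ x) (s : Finset ι) (hf : ∀ i ∈ s, f i ≤ x) (hs : x ≤ ∑ i ∈ s, f i) :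
    ∃ t ⊆ s, x ≤ ∑ i ∈ t, f i ∧ ∑ i ∈ t, f i ≤ 2 * x - 2 := by
  induction s using Finset.cons_induction with
  | empty => simp at hs; omega
  | cons a s ha ih =>
    rw [sum_cons] at hs
    have hfa : f a ≤ x := hf a (mem_cons_self a s)
    by_cases hsx : x ≤ ∑ i ∈ s, f i
    · obtain ⟨t, hts, ht⟩ := ih (fun i hi => hf i (mem_cons_of_mem hi)) hsx
      exact ⟨t, hts.trans (subset_cons ha), ht⟩
    by_cases hfax : f a = x
    · exact ⟨{a}, by simp, by simp [hfax], by simp [hfax]; omega⟩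
    · exact ⟨cons a s ha, Subset.rfl, by rw [sum_cons]; omega, by rw [sum_cons]; omega⟩

namespace SimpleGraph

theorem induce_connected_of_forall_walk {V : Type*} {G : SimpleGraph V} {s : Set V} {a : V}
    (ha : a ∈ s) (h : ∀ u ∈ s, ∃ p : G.Walk u a, ∀ w ∈ p.support, w ∈ s) :
    (G.induce s).Connected := by
  refine G.induce_connected_of_patches a ha fun {u} hu => ?_
  obtain ⟨p, hp⟩ := h u hu
  exact ⟨{w | w ∈ p.support}, hp, p.end_mem_support, p.start_mem_support,
    p.connected_induce_support.preconnected _ _⟩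

namespace IsTree

variable {V : Type*} {T : SimpleGraph V} (hT : T.IsTree)

noncomputable def path (u v : V) : T.Walk u v := (hT.existsUnique_path u v).choose

theorem isPath_path (u v : V) : (hT.path u v).IsPath :=
  (hT.existsUnique_path u v).choose_spec.1

variable {hT} in
theorem eq_path {u v : V} {p : T.Walk u v} (hp : p.IsPath) : p = hT.path u v :=
  (hT.existsUnique_path u v).choose_spec.2 p hp

theorem path_eq_append {u v w : V} (hw : w ∈ (hT.path u v).support) :
    hT.path u v = (hT.path u w).append (hT.path w v) := by
  classical
  have hp := hT.isPath_path u v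
  rw [← (hT.path u v).take_spec hw, ← eq_path (hp.takeUntil hw), ← eq_path (hp.dropUntil hw)]

theorem path_of_adj {u v : V} (h : T.Adj u v) : hT.path u v = .cons h .nil :=
  (eq_path (by simp [h.ne])).symm

def IsDescendant (r u v : V) : Prop := v ∈ (hT.path u r).support

variable {r u v w : V}

theorem isDescendant_refl (r u : V) : hT.IsDescendant r u u := Walk.start_mem_support _

theorem isDescendant_root (r u : V) : hT.IsDescendant r u r := Walk.end_mem_support _

variable {hT}

theorem IsDescendant.trans (huw : hT.IsDescendant r u w) (hwv : hT.IsDescendant r w v) :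
    hT.IsDescendant r u v := by
  unfold IsDescendant at *
  rw [hT.path_eq_append huw]
  exact Walk.support_subset_support_append_right _ _ hwv

theorem IsDescendant.antisymm (huv : hT.IsDescendant r u v) (hvu : hT.IsDescendant r v u) :
    u = v := by
  have h₁ := congrArg Walk.length (hT.path_eq_append huv)
  have h₂ := congrArg Walk.length (hT.path_eq_append hvu)
  simp only [Walk.length_append] at h₁ h₂
  exact Walk.eq_of_length_eq_zero (p := hT.path u v) (by omega)

theorem isDescendant_of_mem_support_path (huv : hT.IsDescendant r u v)
    (hw : w ∈ (hT.path u v).support) : hT.IsDescendant r w v := by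
  have hsplit := hT.path_eq_append hw
  have hpath := hT.isPath_path u r
  rw [hT.path_eq_append huv, hsplit, ← Walk.append_assoc] at hpath
  rw [IsDescendant, ← eq_path hpath.of_append_right]
  exact Walk.support_subset_support_append_left _ _ (Walk.end_mem_support _)

theorem IsDescendant.total {a b : V} (ha : hT.IsDescendant r u a) (hb : hT.IsDescendant r u b) :
    hT.IsDescendant r a b ∨ hT.IsDescendant r b a := by
  unfold IsDescendant at hb
  rw [hT.path_eq_append ha, Walk.mem_support_append_iff] at hb
  exact hb.symm.imp id fun hb' => isDescendant_of_mem_support_path ha hb'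

variable (hT) in
def IsChild (r c v : V) : Prop := T.Adj c v ∧ hT.IsDescendant r c v

theorem IsChild.not_isDescendant {c : V} (hc : hT.IsChild r c v) : ¬ hT.IsDescendant r v c :=
  fun hvc => hc.1.ne (hc.2.antisymm hvc)

theorem IsChild.eq_or_isDescendant {c : V} (hc : hT.IsChild r c v)
    (hw : hT.IsDescendant r c w) : w = c ∨ hT.IsDescendant r v w := by
  unfold IsDescendant at hw
  rw [hT.path_eq_append hc.2, Walk.mem_support_append_iff, hT.path_of_adj hc.1] at hw
  simp only [Walk.support_cons, Walk.support_nil, List.mem_cons, List.not_mem_nil] at hw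
  rcases hw with (rfl | rfl | h) | h
  · exact .inl rfl
  · exact .inr (hT.isDescendant_refl r w)
  · exact h.elim
  · exact .inr h

theorem IsChild.eq_of_isDescendant {c c' : V} (hc : hT.IsChild r c v) (hc' : hT.IsChild r c' v)
    (huc : hT.IsDescendant r u c) (huc' : hT.IsDescendant r u c') : c = c' := by
  have key : ∀ {a b : V}, hT.IsChild r a v → hT.IsChild r b v → hT.IsDescendant r a b → a = b :=
    fun ha hb hab => (ha.eq_or_isDescendant hab).elim Eq.symm
      fun hvb => (hb.not_isDescendant hvb).elim
  exact (huc.total huc').elim (key hc hc') fun h => (key hc' hc h).symm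

theorem exists_isChild_of_isDescendant (huv : hT.IsDescendant r u v) (hne : u ≠ v) :
    ∃ c, hT.IsChild r c v ∧ hT.IsDescendant r u c := by
  have hnil : ¬ (hT.path u v).Nil := Walk.not_nil_of_ne hne
  have hc : (hT.path u v).penultimate ∈ (hT.path u v).support := Walk.getVert_mem_support _ _
  refine ⟨_, ⟨Walk.adj_penultimate hnil, isDescendant_of_mem_support_path huv hc⟩, ?_⟩
  unfold IsDescendant
  rw [hT.path_eq_append huv]
  exact Walk.support_subset_support_append_left _ _ hc

variable [Fintype V]

variable (hT) in
open Classical in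
noncomputable def subtree (r v : V) : Finset V := univ.filter (hT.IsDescendant r · v)

variable (hT) in
open Classical in
noncomputable def children (r v : V) : Finset V := univ.filter (hT.IsChild r · v)

@[simp]
theorem mem_subtree : u ∈ hT.subtree r v ↔ hT.IsDescendant r u v := by simp [subtree]

@[simp]
theorem mem_children : u ∈ hT.children r v ↔ hT.IsChild r u v := by simp [children]

theorem card_subtree_lt {c : V} (hc : hT.IsChild r c v) :
    (hT.subtree r c).card < (hT.subtree r v).card := by
  refine card_lt_card ⟨fun u hu => ?_, fun h => ?_⟩
  · rw [mem_subtree] at hu ⊢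
    exact hu.trans hc.2
  · exact hc.not_isDescendant (mem_subtree.1 (h (mem_subtree.2 (hT.isDescendant_refl r v))))

@[simp]
theorem subtree_root : hT.subtree r r = univ := by
  ext u
  simp [hT.isDescendant_root r u]

variable (hT) in
theorem exists_card_subtree_gt_and_card_children_le (r : V) {x : ℕ} (hx : x < Fintype.card V) :
    ∃ v, x < (hT.subtree r v).card ∧ ∀ c ∈ hT.children r v, (hT.subtree r c).card ≤ x := by
  obtain ⟨v, hv, hmin⟩ := (univ.filter fun v => x < (hT.subtree r v).card).exists_min_image
    (fun v => (hT.subtree r v).card) ⟨r, by simpa using hx⟩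
  refine ⟨v, (mem_filter.1 hv).2, fun c hc => not_lt.1 fun hxc => ?_⟩
  have := hmin c (mem_filter.2 ⟨mem_univ c, hxc⟩)
  exact (card_subtree_lt (mem_children.1 hc)).not_ge this

variable [DecidableEq V]

variable (hT) in
noncomputable def limb (r v : V) (C : Finset V) : Finset V := insert v (C.biUnion (hT.subtree r))

theorem mem_limb {C : Finset V} :
    u ∈ hT.limb r v C ↔ u = v ∨ ∃ c ∈ C, hT.IsDescendant r u c := by
  simp [limb]

theorem subtree_eq_limb_children : hT.subtree r v = hT.limb r v (hT.children r v) := by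
  ext u
  simp only [mem_subtree, mem_limb, mem_children]
  refine ⟨fun huv => ?_, ?_⟩
  · by_cases hne : u = v
    · exact .inl hne
    · exact .inr (exists_isChild_of_isDescendant huv hne)
  · rintro (rfl | ⟨c, hc, huc⟩)
    · exact hT.isDescendant_refl r u
    · exact huc.trans hc.2

theorem card_limb {C : Finset V} (hC : C ⊆ hT.children r v) :
    (hT.limb r v C).card = 1 + ∑ c ∈ C, (hT.subtree r c).card := by
  have hCv : ∀ c ∈ C, hT.IsChild r c v := fun c hc => mem_children.1 (hC hc)
  have hv : v ∉ C.biUnion (hT.subtree r) := by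
    simp only [mem_biUnion, mem_subtree, not_exists, not_and]
    exact fun c hc => (hCv c hc).not_isDescendant
  have hdisj : (C : Set V).PairwiseDisjoint (hT.subtree r) := fun c hc c' hc' hne =>
    Finset.disjoint_left.2 fun u huc huc' => hne <|
      (hCv c hc).eq_of_isDescendant (hCv c' hc') (mem_subtree.1 huc) (mem_subtree.1 huc')
  rw [limb, card_insert_of_notMem hv, card_biUnion hdisj, add_comm]

theorem induce_limb_connected {C : Finset V} (hC : C ⊆ hT.children r v) :
    (T.induce (hT.limb r v C : Set V)).Connected := by
  refine induce_connected_of_forall_walk (a := v) (mem_limb.2 (.inl rfl)) fun u hu => ?_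
  rcases mem_limb.1 hu with rfl | ⟨c, hcC, huc⟩
  · exact ⟨.nil, by simp [mem_limb]⟩
  have hc := mem_children.1 (hC hcC)
  refine ⟨(hT.path u c).concat hc.1, fun w hw => ?_⟩
  rw [Walk.support_concat, List.mem_append, List.mem_singleton] at hw
  rcases hw with hw | rfl
  · exact mem_limb.2 (.inr ⟨c, hcC, isDescendant_of_mem_support_path huc hw⟩)
  · exact mem_limb.2 (.inl rfl)

theorem induce_compl_limb_connected {C : Finset V} (hC : C ⊆ hT.children r v) :
    (T.induce ((hT.limb r v C : Set V)ᶜ ∪ {v})).Connected := by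
  set B : Set V := (hT.limb r v C : Set V)ᶜ ∪ {v}
  have hB : ∀ u, u ∈ B ↔ u = v ∨ ∀ c ∈ C, ¬ hT.IsDescendant r u c := by
    intro u
    simp only [B, Set.mem_union, Set.mem_compl_iff, mem_coe, mem_limb, Set.mem_singleton_iff,
      not_or, not_exists, not_and]
    tauto
  have hBdown : ∀ u ∈ B, ∀ c ∈ C, ¬ hT.IsDescendant r u c := by
    intro u hu c hcC huc
    rcases (hB u).1 hu with rfl | h
    · exact (mem_children.1 (hC hcC)).not_isDescendant huc
    · exact h c hcC huc
  have hpath : ∀ u ∈ B, ∀ w ∈ (hT.path u r).support, w ∈ B := fun u hu w huw =>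
    (hB w).2 <| .inr fun c hcC hwc =>
      hBdown u hu c hcC ((show hT.IsDescendant r u w from huw).trans hwc)
  exact induce_connected_of_forall_walk (hpath v (by simp [B]) r (Walk.end_mem_support _))
    fun u hu => ⟨hT.path u r, hpath u hu⟩

end IsTree
end SimpleGraph

theorem tree_limb_splitting_general
    {V : Type*} [Fintype V]
    (T : SimpleGraph V) (hT : T.IsTree)
    (n : ℕ) (hn : Fintype.card V = n)
    (x : ℕ) (hx2 : 2 ≤ x) (hxn : x < n) :
    ∃ (S : Finset V) (v : V), v ∈ S ∧ x < S.card ∧ S.card ≤ 2 * x - 1 ∧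
      (T.induce (S : Set V)).Connected ∧
      (T.induce ((↑S : Set V)ᶜ ∪ {v})).Connected := by
  classical
  subst hn
  obtain ⟨r⟩ : Nonempty V := Fintype.card_pos_iff.1 (by omega)
  obtain ⟨v, hv, hchildren⟩ := hT.exists_card_subtree_gt_and_card_children_le r hxn
  rw [hT.subtree_eq_limb_children, hT.card_limb Subset.rfl] at hv
  obtain ⟨C, hC, hxC, hC2x⟩ :=
    exists_subset_le_sum_le_two_mul_sub_two _ hx2 _ hchildren (by omega)
  refine ⟨hT.limb r v C, v, hT.mem_limb.2 (.inl rfl), ?_, ?_, hT.induce_limb_connected hC,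
    hT.induce_compl_limb_connected hC⟩ <;> rw [hT.card_limb hC] <;> omega

/-- In any tree on `n` vertices, for `2 ≤ x < n` there is a connected
induced subtree `S` with `x < |S| ≤ 2x − 1` and a vertex `v ∈ S` such that the
subgraph induced on `(V ∖ S) ∪ {v}` is also connected. -/
theorem tree_limb_splitting
    {V : Type*} [Fintype V] [DecidableEq V]
    (T : SimpleGraph V) (hT : T.IsTree)
    (n : ℕ) (hn : Fintype.card V = n)
    (x : ℕ) (hx2 : 2 ≤ x) (hxn : x < n) :
    ∃ (S : Finset V) (v : V), v ∈ S ∧ x < S.card ∧ S.card ≤ 2 * x - 1 ∧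
      (T.induce (S : Set V)).Connected ∧
      (T.induce ((↑S : Set V)ᶜ ∪ {v})).Connected :=
  tree_limb_splitting_general T hT n hn x hx2 hxn
end

section
/- Let G be a connected simple graph on a finite vertex set V with |V| = n, and let k be a positive integer. Then there exists a family S_1, …, S_j of at most k subsets of V (j ≤ k) such that S_1 ∪ ⋯ ∪ S_j = V, the subgraph of G induced on each S_i is connected, and |S_i| ≤ 2·⌊n/(k+1)⌋ + 1 for every i. -/
/-!
Let `t = ⌊n/(k+1)⌋ ≥ 1` (if `n ≤ k`, singletons suffice). From a connected vertex set `A` rooted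
at `r` with `|A| ≥ t + 2` one can cut off a connected "limb" `S` with `|S| ≤ 2t + 1` so that the
rest `A'` is still connected, contains `r`, and `S ∪ A' = A`, `|A'| ≤ |A| - (t + 1)`. If some
component of `A - r` has at least `t + 2` vertices, cut a limb from it, rooted at a neighbour of
`r`; otherwise every component has at most `t + 1` vertices, and a greedy choice of components
with total size in `[t + 1, 2t]`, together with `r`, is the limb. Cutting `k - 1` limbs off `V`
leaves at most `2t + 1` vertices, which form the last set.
-/

open Finset

namespace SimpleGraph

variable {V : Type*} (G : SimpleGraph V)

/-- Reachability and connectivity inside `G.induce A`, phrased on `V` to avoid subtypes. -/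
def ReachableIn (A : Finset V) : V → V → Prop :=
  Relation.ReflTransGen fun a b => a ∈ A ∧ b ∈ A ∧ G.Adj a b

def ConnectedOn (A : Finset V) : Prop :=
  A.Nonempty ∧ ∀ ⦃x⦄, x ∈ A → ∀ ⦃y⦄, y ∈ A → G.ReachableIn A x y

open Classical in
noncomputable def componentIn (B : Finset V) (b : V) : Finset V :=
  B.filter (G.ReachableIn B b)

/-- `D` is a union of connected components of `G.induce B`. -/
def IsClosedIn (B D : Finset V) : Prop :=
  D ⊆ B ∧ ∀ ⦃x y⦄, x ∈ D → y ∈ B → G.Adj x y → y ∈ D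

variable {G}

namespace ReachableIn

variable {A : Finset V} {x y : V}

lemma mono {B : Finset V} (h : A ⊆ B) (hxy : G.ReachableIn A x y) : G.ReachableIn B x y :=
  Relation.ReflTransGen.mono (fun _ _ hab => ⟨h hab.1, h hab.2.1, hab.2.2⟩) x y hxy

lemma symm (hxy : G.ReachableIn A x y) : G.ReachableIn A y x := by
  induction hxy with
  | refl => exact .refl
  | tail _ step ih => exact .head ⟨step.2.1, step.1, step.2.2.symm⟩ ih

lemma mem_right (hxy : G.ReachableIn A x y) (hx : x ∈ A) : y ∈ A := by
  induction hxy with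
  | refl => exact hx
  | tail _ step _ => exact step.2.1

end ReachableIn

lemma connectedOn_of_forall_reachableIn {A : Finset V} {r : V} (hr : r ∈ A)
    (h : ∀ x ∈ A, G.ReachableIn A x r) : G.ConnectedOn A :=
  ⟨⟨r, hr⟩, fun x hx y hy => (h x hx).trans (h y hy).symm⟩

lemma connectedOn_singleton (v : V) : G.ConnectedOn {v} :=
  connectedOn_of_forall_reachableIn (mem_singleton_self v) fun x hx => by
    rw [mem_singleton.1 hx]
    exact .refl

lemma ConnectedOn.induce_connected {A : Finset V} (hA : G.ConnectedOn A) :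
    (G.induce (A : Set V)).Connected := by
  have hreach : ∀ {x y}, G.ReachableIn A x y → ∀ (hx : x ∈ A) (hy : y ∈ A),
      (G.induce (A : Set V)).Reachable ⟨x, hx⟩ ⟨y, hy⟩ := by
    intro x y hxy
    induction hxy with
    | refl => exact fun _ _ => .rfl
    | tail _ step ih =>
      exact fun hx _ => (ih hx step.1).trans (Adj.reachable (G := G.induce _) step.2.2)
  obtain ⟨a, ha⟩ := hA.1
  exact (connected_iff _).2 ⟨fun ⟨x, hx⟩ ⟨y, hy⟩ => hreach (hA.2 hx hy) hx hy, ⟨⟨a, ha⟩⟩⟩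

lemma Connected.connectedOn_univ [Fintype V] (hG : G.Connected) : G.ConnectedOn univ := by
  have : Nonempty V := hG.nonempty
  have hreach (x y : V) : G.ReachableIn univ x y := by
    obtain ⟨w⟩ := hG.preconnected x y
    induction w with
    | nil => exact .refl
    | cons hadj _ ih => exact .head ⟨mem_univ _, mem_univ _, hadj⟩ ih
  exact ⟨univ_nonempty, fun x _ y _ => hreach x y⟩

section Components

variable {B C D : Finset V} {b x y : V}

lemma mem_componentIn : x ∈ G.componentIn B b ↔ x ∈ B ∧ G.ReachableIn B b x := by
  classical
  simp [componentIn]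

lemma IsClosedIn.reachableIn (hD : G.IsClosedIn B D) (hx : x ∈ D)
    (hxy : G.ReachableIn B x y) : G.ReachableIn D x y := by
  induction hxy with
  | refl => exact .refl
  | tail _ step ih =>
    exact ih.tail ⟨ih.mem_right hx, hD.2 (ih.mem_right hx) step.2.1 step.2.2, step.2.2⟩

lemma IsClosedIn.componentIn_subset (hD : G.IsClosedIn B D) (hx : x ∈ D) :
    G.componentIn B x ⊆ D := fun _ hy =>
  (hD.reachableIn hx (mem_componentIn.1 hy).2).mem_right hx

lemma isClosedIn_self : G.IsClosedIn B B :=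
  ⟨subset_rfl, fun _ _ _ hy _ => hy⟩

lemma isClosedIn_componentIn : G.IsClosedIn B (G.componentIn B b) := by
  refine ⟨fun x hx => (mem_componentIn.1 hx).1, fun x y hx hy hxy => mem_componentIn.2 ⟨hy, ?_⟩⟩
  obtain ⟨hxB, hbx⟩ := mem_componentIn.1 hx
  exact hbx.tail ⟨hxB, hy, hxy⟩

lemma self_mem_componentIn (hb : b ∈ B) : b ∈ G.componentIn B b :=
  mem_componentIn.2 ⟨hb, .refl⟩

lemma connectedOn_componentIn (hb : b ∈ B) : G.ConnectedOn (G.componentIn B b) :=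
  connectedOn_of_forall_reachableIn (self_mem_componentIn hb) fun _ hx =>
    (isClosedIn_componentIn.reachableIn (self_mem_componentIn hb)
      (mem_componentIn.1 hx).2).symm

variable [DecidableEq V]

lemma IsClosedIn.componentIn_subset_sdiff (hD : G.IsClosedIn B D) (hxD : x ∉ D) :
    G.componentIn B x ⊆ B \ D := fun y hy => by
  obtain ⟨hyB, hxy⟩ := mem_componentIn.1 hy
  exact mem_sdiff.2 ⟨hyB, fun hyD => hxD ((hD.reachableIn hyD hxy.symm).mem_right hyD)⟩

lemma IsClosedIn.sdiff (hD : G.IsClosedIn B D) (hC : G.IsClosedIn B C) :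
    G.IsClosedIn B (D \ C) := by
  refine ⟨sdiff_subset.trans hD.1, fun x y hx hy hxy => mem_sdiff.2 ⟨?_, fun hyC => ?_⟩⟩
  · exact hD.2 (mem_sdiff.1 hx).1 hy hxy
  · exact (mem_sdiff.1 hx).2 (hC.2 hyC (hD.1 (mem_sdiff.1 hx).1) hxy.symm)

end Components

variable [DecidableEq V]

lemma ConnectedOn.union_of_adj {A B : Finset V} {a b : V} (hA : G.ConnectedOn A)
    (hB : G.ConnectedOn B) (ha : a ∈ A) (hb : b ∈ B) (hab : G.Adj a b) :
    G.ConnectedOn (A ∪ B) := by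
  refine connectedOn_of_forall_reachableIn (mem_union_right A hb) fun x hx => ?_
  rcases mem_union.1 hx with hxA | hxB
  · exact ((hA.2 hxA ha).mono subset_union_left).tail
      ⟨mem_union_left B ha, mem_union_right A hb, hab⟩
  · exact (hB.2 hxB hb).mono subset_union_right

section Root

variable {A D T : Finset V} {r x : V}

lemma ConnectedOn.exists_adj_root (hA : G.ConnectedOn A) (hr : r ∈ A) (hx : x ∈ A.erase r) :
    ∃ c ∈ G.componentIn (A.erase r) x, G.Adj c r := by
  by_contra! hno
  set C := G.componentIn (A.erase r) x
  have hCA : G.IsClosedIn A C := by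
    refine ⟨isClosedIn_componentIn.1.trans (erase_subset r A), fun c y hc hy hcy => ?_⟩
    have hyr : y ≠ r := by rintro rfl; exact hno c hc hcy
    exact isClosedIn_componentIn.2 hc (mem_erase.2 ⟨hyr, hy⟩) hcy
  have hrC : r ∈ C :=
    (hCA.reachableIn (self_mem_componentIn hx) (hA.2 (mem_of_mem_erase hx) hr)).mem_right
      (self_mem_componentIn hx)
  exact (mem_erase.1 (isClosedIn_componentIn.1 hrC)).1 rfl

lemma ConnectedOn.reachableIn_root (hA : G.ConnectedOn A) (hr : r ∈ A) (hx : x ∈ A.erase r)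
    (hT : G.componentIn (A.erase r) x ⊆ T) (hrT : r ∈ T) : G.ReachableIn T x r := by
  obtain ⟨c, hc, hcr⟩ := hA.exists_adj_root hr hx
  exact (((connectedOn_componentIn hx).2 (self_mem_componentIn hx) hc).mono hT).tail
    ⟨hT hc, hrT, hcr⟩

lemma ConnectedOn.insert_of_isClosedIn (hA : G.ConnectedOn A) (hr : r ∈ A)
    (hD : G.IsClosedIn (A.erase r) D) : G.ConnectedOn (insert r D) := by
  refine connectedOn_of_forall_reachableIn (mem_insert_self r D) fun x hx => ?_
  rcases mem_insert.1 hx with rfl | hxD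
  · exact .refl
  · exact hA.reachableIn_root hr (hD.1 hxD)
      ((hD.componentIn_subset hxD).trans (subset_insert r D)) (mem_insert_self r D)

lemma ConnectedOn.sdiff_of_isClosedIn (hA : G.ConnectedOn A) (hr : r ∈ A)
    (hD : G.IsClosedIn (A.erase r) D) : G.ConnectedOn (A \ D) := by
  have hrD : r ∈ A \ D := mem_sdiff.2 ⟨hr, fun h => (mem_erase.1 (hD.1 h)).1 rfl⟩
  refine connectedOn_of_forall_reachableIn hrD fun x hx => ?_
  obtain ⟨hxA, hxD⟩ := mem_sdiff.1 hx
  by_cases hxr : x = r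
  · rw [hxr]
    exact .refl
  · have hx' : x ∈ A.erase r := mem_erase.2 ⟨hxr, hxA⟩
    exact hA.reachableIn_root hr hx'
      ((hD.componentIn_subset_sdiff hxD).trans (sdiff_subset_sdiff (erase_subset r A) le_rfl))
      hrD

end Root

variable (G) in
structure IsLimbSplit (t : ℕ) (A : Finset V) (r : V) (S A' : Finset V) : Prop where
  union_eq : S ∪ A' = A
  connectedOn_limb : G.ConnectedOn S
  connectedOn_rest : G.ConnectedOn A'
  root_mem : r ∈ A'
  card_limb_le : #S ≤ 2 * t + 1
  card_rest_add_le : #A' + (t + 1) ≤ #A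

section Limb

variable {t : ℕ} {A D : Finset V} {r : V}

lemma ConnectedOn.isLimbSplit_of_isClosedIn (hA : G.ConnectedOn A) (hr : r ∈ A)
    (hD : G.IsClosedIn (A.erase r) D) (hlo : t + 1 ≤ #D) (hhi : #D ≤ 2 * t) :
    G.IsLimbSplit t A r (insert r D) (A \ D) := by
  have hDA : D ⊆ A := hD.1.trans (erase_subset r A)
  have hrD : r ∉ D := fun h => (mem_erase.1 (hD.1 h)).1 rfl
  refine ⟨?_, hA.insert_of_isClosedIn hr hD, hA.sdiff_of_isClosedIn hr hD,
    mem_sdiff.2 ⟨hr, hrD⟩, ?_, ?_⟩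
  · rw [insert_union, union_sdiff_of_subset hDA, insert_eq_of_mem hr]
  · rw [card_insert_of_notMem hrD]
    omega
  · rw [card_sdiff_of_subset hDA]
    have := card_le_card hDA
    omega

lemma ConnectedOn.isLimbSplit_of_component {C S C' : Finset V} {c : V} (hA : G.ConnectedOn A)
    (hr : r ∈ A) (hC : G.IsClosedIn (A.erase r) C) (hcr : G.Adj c r)
    (hsplit : G.IsLimbSplit t C c S C') : G.IsLimbSplit t A r S (A \ C ∪ C') := by
  have hCA : C ⊆ A := hC.1.trans (erase_subset r A)
  have hrC : r ∈ A \ C := mem_sdiff.2 ⟨hr, fun h => (mem_erase.1 (hC.1 h)).1 rfl⟩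
  refine ⟨?_, hsplit.connectedOn_limb, ?_, mem_union_left C' hrC, hsplit.card_limb_le, ?_⟩
  · rw [union_left_comm, hsplit.union_eq, sdiff_union_of_subset hCA]
  · exact (hA.sdiff_of_isClosedIn hr hC).union_of_adj hsplit.connectedOn_rest hrC
      hsplit.root_mem hcr.symm
  · have := card_union_le (A \ C) C'
    have := card_le_card hCA
    have := hsplit.card_rest_add_le
    rw [card_sdiff_of_subset hCA] at *
    omega

lemma exists_isClosedIn_card_mem_Icc {E : Finset V} (ht : 1 ≤ t)
    (hsmall : ∀ b ∈ E, #(G.componentIn E b) ≤ t + 1) :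
    ∀ B, G.IsClosedIn E B → t + 1 ≤ #B → ∃ D, G.IsClosedIn E D ∧ t + 1 ≤ #D ∧ #D ≤ 2 * t := by
  intro B
  induction B using Finset.strongInduction with
  | H B ih =>
    intro hB hcard
    by_cases hle : #B ≤ 2 * t
    · exact ⟨B, hB, hcard, hle⟩
    obtain ⟨b, hb⟩ : B.Nonempty := card_pos.1 (by omega)
    by_cases hC : #(G.componentIn E b) = t + 1
    · exact ⟨_, isClosedIn_componentIn (b := b), by omega, by omega⟩
    have hBC : B \ G.componentIn E b ⊂ B :=
      sdiff_ssubset (hB.componentIn_subset hb) ⟨b, self_mem_componentIn (hB.1 hb)⟩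
    refine ih _ hBC (hB.sdiff isClosedIn_componentIn) ?_
    have := le_card_sdiff (G.componentIn E b) B
    have := hsmall b (hB.1 hb)
    omega

end Limb

theorem ConnectedOn.exists_isLimbSplit {t : ℕ} (ht : 1 ≤ t) {A : Finset V}
    (hA : G.ConnectedOn A) {r : V} (hr : r ∈ A) (hcard : t + 2 ≤ #A) :
    ∃ S A', G.IsLimbSplit t A r S A' := by
  induction A using Finset.strongInduction generalizing r with
  | H A ih =>
    by_cases hlarge : ∃ b ∈ A.erase r, t + 2 ≤ #(G.componentIn (A.erase r) b)
    · obtain ⟨b, hb, hCcard⟩ := hlarge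
      obtain ⟨c, hc, hcr⟩ := hA.exists_adj_root hr hb
      have hCA : G.componentIn (A.erase r) b ⊂ A :=
        Finset.ssubset_of_subset_of_ssubset isClosedIn_componentIn.1 (erase_ssubset hr)
      obtain ⟨S, C', hsplit⟩ := ih _ hCA (connectedOn_componentIn hb) hc hCcard
      exact ⟨S, _, hA.isLimbSplit_of_component hr isClosedIn_componentIn hcr hsplit⟩
    · push Not at hlarge
      have hE : t + 1 ≤ #(A.erase r) := by
        rw [card_erase_of_mem hr]
        omega
      obtain ⟨D, hD, hlo, hhi⟩ := exists_isClosedIn_card_mem_Icc ht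
        (fun b hb => Nat.le_of_lt_succ (hlarge b hb)) _ isClosedIn_self hE
      exact ⟨_, _, hA.isLimbSplit_of_isClosedIn hr hD hlo hhi⟩

theorem ConnectedOn.exists_cover {t : ℕ} (ht : 1 ≤ t) (j : ℕ) :
    ∀ {A : Finset V}, G.ConnectedOn A → #A ≤ j * (t + 1) + (2 * t + 1) →
      ∃ F : Fin (j + 1) → Finset V, (∀ i, G.ConnectedOn (F i)) ∧
        (∀ i, #(F i) ≤ 2 * t + 1) ∧ ∀ x ∈ A, ∃ i, x ∈ F i := by
  induction j with
  | zero =>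
    intro A hA hcard
    exact ⟨fun _ => A, fun _ => hA, fun _ => by simpa using hcard, fun x hx => ⟨0, hx⟩⟩
  | succ j ih =>
    intro A hA hcard
    by_cases hsmall : #A ≤ 2 * t + 1
    · exact ⟨fun _ => A, fun _ => hA, fun _ => hsmall, fun x hx => ⟨0, hx⟩⟩
    obtain ⟨r, hr⟩ := hA.1
    obtain ⟨S, A', hsplit⟩ := hA.exists_isLimbSplit ht hr (by omega)
    obtain ⟨F, hconn, hsize, hcover⟩ := ih hsplit.connectedOn_rest (by
      have := hsplit.card_rest_add_le
      rw [add_mul] at hcard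
      omega)
    refine ⟨Fin.cons S F, Fin.cases hsplit.connectedOn_limb hconn,
      Fin.cases hsplit.card_limb_le hsize, fun x hx => ?_⟩
    rw [← hsplit.union_eq, mem_union] at hx
    rcases hx with hxS | hxA'
    · exact ⟨0, hxS⟩
    · obtain ⟨i, hi⟩ := hcover x hxA'
      exact ⟨i.succ, by simpa using hi⟩

end SimpleGraph

/-- Every connected graph on `n` vertices can be covered by at most `k`
connected subgraphs, each with at most `2·⌊n/(k+1)⌋ + 1` vertices. -/
theorem connected_cover_by_small_connected_subgraphs
    {V : Type*} [Fintype V] [DecidableEq V]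
    (G : SimpleGraph V) (hG : G.Connected)
    (n : ℕ) (hn : Fintype.card V = n)
    (k : ℕ) (hk : 0 < k) :
    ∃ (j : ℕ) (S : Fin j → Finset V), j ≤ k ∧
      (⋃ i, (↑(S i) : Set V)) = Set.univ ∧
      (∀ i, (G.induce (↑(S i) : Set V)).Connected) ∧
      (∀ i, (S i).card ≤ 2 * (n / (k + 1)) + 1) := by
  subst hn
  by_cases hnk : Fintype.card V ≤ k
  · refine ⟨_, fun i => {(Fintype.equivFin V).symm i}, hnk, ?_,
      fun i => (G.connectedOn_singleton _).induce_connected, fun i => by simp⟩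
    exact Set.eq_univ_of_forall fun v => Set.mem_iUnion.2 ⟨Fintype.equivFin V v, by simp⟩
  obtain ⟨j, rfl⟩ : ∃ j, k = j + 1 := ⟨k - 1, by omega⟩
  set t := Fintype.card V / (j + 1 + 1)
  have ht : 1 ≤ t := (Nat.one_le_div_iff (by omega)).2 (by omega)
  have hcard : #(univ : Finset V) ≤ j * (t + 1) + (2 * t + 1) := by
    have hdiv : (j + 1 + 1) * t + Fintype.card V % (j + 1 + 1) = Fintype.card V :=
      Nat.div_add_mod _ _
    have := Nat.mod_lt (Fintype.card V) (show 0 < j + 1 + 1 by omega)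
    rw [card_univ]
    linarith
  obtain ⟨F, hconn, hsize, hcover⟩ := hG.connectedOn_univ.exists_cover ht j hcard
  refine ⟨j + 1, F, le_rfl, ?_, fun i => (hconn i).induce_connected, hsize⟩
  exact Set.eq_univ_of_forall fun v => Set.mem_iUnion.2 (hcover v (mem_univ v))
end

section
/- Let G be a connected simple graph on a finite vertex set V with |V| = n and graph distance dist, and let k be a positive integer. Then there exist initial cop positions c_1, …, c_k ∈ V and response functions f_1, …, f_k : V → V with dist(c_j, f_j(v)) ≤ ⌊n/(k+1)⌋ for all j and all v ∈ V, such that for every probability distribution p on V and every i.i.d. sequence (X_t)_{t≥0} with law p, the capture time T = min{ t ≥ 1 : there exists j with t ≥ dist(c_j, f_j(X_0)) and X_t = f_j(X_0) } satisfies E[T] ≤ 3n/(k+1) + 1. -/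
open MeasureTheory ProbabilityTheory Finset
open scoped ENNReal

/-!
Fix a shortest-path spanning tree and put `r = ⌊n/(k+1)⌋`. Take a deepest vertex `u` whose subtree
has more than `r` vertices. Each child subtree has at most `r` vertices, so the whole subtree lies
within distance `r` of `u`. If that subtree has more than `2r+1` vertices, then some union of child
subtrees with between `r+1` and `2r` vertices also lies within distance `r` of `u`. Cutting off such
a piece leaves a parent-closed set. After `k-1` cuts at most `2r+1` vertices remain, and they too
lie within distance `r` of a single vertex. So `V` splits into `k` pieces of at most `2r+1`
vertices, and the `j`-th piece lies within distance `r` of `c_j`.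

Number the vertices of each piece `0, …, 2r`. Cop `j` walks to the vertex of its piece that has
the number of `X₀`. From time `r+1` on, the gambler is caught as soon as `X_t` has the number of
`X₀`. If that number has probability `q`, the wait after time `r` is geometric, so it contributes
`q · (1-q)/q` to the expectation. Hence `E[T] ≤ r + 1 + ∑ (1 - q) = 3r + 1`.
-/

theorem Finset.exists_subset_card_biUnion_mem_Ioc {ι α : Type*} [DecidableEq α] {s : Finset ι}
    {F : ι → Finset α} {r : ℕ} (hF : ∀ i ∈ s, #(F i) ≤ r) (hs : r < #(s.biUnion F)) :
    ∃ s' ⊆ s, r < #(s'.biUnion F) ∧ #(s'.biUnion F) ≤ 2 * r := by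
  classical
  induction s using Finset.induction_on with
  | empty => simp at hs
  | insert a s ha ih =>
    by_cases hlarge : r < #(s.biUnion F)
    · obtain ⟨s', hs', h⟩ := ih (fun i hi => hF i (mem_insert_of_mem hi)) hlarge
      exact ⟨s', hs'.trans (subset_insert a s), h⟩
    refine ⟨insert a s, Subset.rfl, hs, ?_⟩
    rw [biUnion_insert]
    have := card_union_le (F a) (s.biUnion F)
    have := hF a (mem_insert_self a s)
    omega

structure ShortestPathTree {V : Type*} (G : SimpleGraph V) where
  root : V
  parent : V → V
  parent_root : parent root = root
  adj_parent : ∀ v ≠ root, G.Adj (parent v) v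
  dist_parent_lt : ∀ v ≠ root, G.dist root (parent v) < G.dist root v

theorem SimpleGraph.Connected.exists_adj_dist_lt {V : Type*} {G : SimpleGraph V}
    (hG : G.Connected) {z v : V} (hv : v ≠ z) : ∃ w, G.Adj w v ∧ G.dist z w < G.dist z v := by
  obtain ⟨p, hp⟩ := hG.exists_walk_length_eq_dist v z
  cases p with
  | nil => exact absurd rfl hv
  | cons h q =>
    refine ⟨_, h.symm, ?_⟩
    rw [SimpleGraph.dist_comm, SimpleGraph.dist_comm (u := z), ← hp, SimpleGraph.Walk.length_cons]
    exact Nat.lt_succ_of_le (SimpleGraph.dist_le q)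

theorem SimpleGraph.Connected.nonempty_shortestPathTree {V : Type*} {G : SimpleGraph V}
    (hG : G.Connected) : Nonempty (ShortestPathTree G) := by
  classical
  obtain ⟨z⟩ := hG.nonempty
  choose par hadj hlt using fun v (hv : v ≠ z) => hG.exists_adj_dist_lt hv
  exact ⟨{ root := z
           parent := fun v => if hv : v = z then z else par v hv
           parent_root := dif_pos rfl
           adj_parent := fun v hv => by simpa [hv] using hadj v hv
           dist_parent_lt := fun v hv => by simpa [hv] using hlt v hv }⟩

namespace ShortestPathTree

variable {V : Type*} {G : SimpleGraph V} (T : ShortestPathTree G)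

def IsAncestor (u w : V) : Prop := ∃ i, T.parent^[i] w = u

variable {T}

theorem isAncestor_refl (u : V) : T.IsAncestor u u := ⟨0, rfl⟩

theorem IsAncestor.of_parent {u w : V} (h : T.IsAncestor u (T.parent w)) : T.IsAncestor u w :=
  let ⟨i, hi⟩ := h; ⟨i + 1, hi⟩

theorem IsAncestor.parent_of_ne {u w : V} (h : T.IsAncestor u w) (hne : w ≠ u) :
    T.IsAncestor u (T.parent w) := by
  obtain ⟨_ | i, hi⟩ := h
  · exact absurd hi hne
  · exact ⟨i, hi⟩

theorem IsAncestor.eq_root {u : V} (h : T.IsAncestor u T.root) : u = T.root := by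
  obtain ⟨i, rfl⟩ := h
  exact Function.iterate_fixed T.parent_root i

theorem parent_ne_self {v : V} (hv : v ≠ T.root) : T.parent v ≠ v :=
  fun h => (T.dist_parent_lt v hv).ne (by rw [h])

theorem dist_root_parent_le (v : V) : G.dist T.root (T.parent v) ≤ G.dist T.root v := by
  by_cases hv : v = T.root
  · rw [hv, T.parent_root]
  · exact (T.dist_parent_lt v hv).le

theorem IsAncestor.dist_root_le {u w : V} (h : T.IsAncestor u w) :
    G.dist T.root u ≤ G.dist T.root w := by
  obtain ⟨i, rfl⟩ := h
  induction i generalizing w with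
  | zero => rfl
  | succ i ih => exact ih.trans (T.dist_root_parent_le w)

theorem IsAncestor.dist_root_lt {u w : V} (h : T.IsAncestor u w) (hne : u ≠ w) :
    G.dist T.root u < G.dist T.root w := by
  have hw : w ≠ T.root := by
    rintro rfl
    exact hne h.eq_root
  exact (h.parent_of_ne hne.symm).dist_root_le.trans_lt (T.dist_parent_lt w hw)

theorem isAncestor_root (w : V) : T.IsAncestor T.root w := by
  induction w using (measure (G.dist T.root)).wf.induction with
  | _ w ih =>
    by_cases hw : w = T.root
    · rw [hw]
      exact isAncestor_refl _
    · exact (ih _ (T.dist_parent_lt w hw)).of_parent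

theorem IsAncestor.exists_child {u w : V} (h : T.IsAncestor u w) (hne : w ≠ u) :
    ∃ c, T.parent c = u ∧ c ≠ u ∧ T.IsAncestor c w := by
  obtain ⟨i, hi⟩ := h
  induction i generalizing w with
  | zero => exact absurd hi hne
  | succ i ih =>
    by_cases hp : T.parent w = u
    · exact ⟨w, hp, hne, isAncestor_refl w⟩
    · obtain ⟨c, hcu, hc, hcw⟩ := ih hp hi
      exact ⟨c, hcu, hc, hcw.of_parent⟩

theorem ne_root_of_parent_eq {c u : V} (hcu : T.parent c = u) (hne : c ≠ u) : c ≠ T.root := by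
  rintro rfl
  exact hne (T.parent_root ▸ hcu)

theorem dist_parent_le_add_one {v : V} (hv : v ≠ T.root) (w : V) :
    G.dist (T.parent v) w ≤ G.dist v w + 1 := by
  have h := (T.adj_parent v hv).reachable.dist_triangle_left w
  rw [SimpleGraph.dist_eq_one_iff_adj.2 (T.adj_parent v hv)] at h
  omega

theorem dist_le_dist_parent_add_one {v : V} (hv : v ≠ T.root) (w : V) :
    G.dist v w ≤ G.dist (T.parent v) w + 1 := by
  have h := (T.adj_parent v hv).symm.reachable.dist_triangle_left w
  rw [SimpleGraph.dist_eq_one_iff_adj.2 (T.adj_parent v hv).symm] at h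
  omega

variable (T)

def ParentClosed (W : Finset V) : Prop := ∀ w ∈ W, T.parent w ∈ W

def HangsFrom (W : Finset V) (u : V) : Prop := ∀ w ∈ W, w ≠ u → w ≠ T.root ∧ T.parent w ∈ W

open Classical in
noncomputable def subtree (W : Finset V) (u : V) : Finset V := {w ∈ W | T.IsAncestor u w}

variable {T} {W P : Finset V} {u w : V} {r : ℕ}

theorem mem_subtree : w ∈ T.subtree W u ↔ w ∈ W ∧ T.IsAncestor u w := by
  classical
  simp [subtree]

theorem subtree_subset : T.subtree W u ⊆ W := fun _ hw => (mem_subtree.1 hw).1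

theorem subtree_root : T.subtree W T.root = W :=
  Subset.antisymm subtree_subset fun w hw => mem_subtree.2 ⟨hw, isAncestor_root w⟩

theorem mem_subtree_of_parent_mem (hw : w ∈ W) (h : T.parent w ∈ T.subtree W u) :
    w ∈ T.subtree W u :=
  mem_subtree.2 ⟨hw, (mem_subtree.1 h).2.of_parent⟩

theorem ParentClosed.mem_of_isAncestor (hW : T.ParentClosed W) (hw : w ∈ W)
    (h : T.IsAncestor u w) : u ∈ W := by
  obtain ⟨i, rfl⟩ := h
  induction i generalizing w with
  | zero => exact hw
  | succ i ih => exact ih (hW w hw)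

theorem ParentClosed.root_mem (hW : T.ParentClosed W) (hw : w ∈ W) : T.root ∈ W :=
  hW.mem_of_isAncestor hw (isAncestor_root w)

theorem ParentClosed.hangsFrom_root (hW : T.ParentClosed W) : T.HangsFrom W T.root :=
  fun w hw hwr => ⟨hwr, hW w hw⟩

theorem ParentClosed.hangsFrom_subtree (hW : T.ParentClosed W) : T.HangsFrom (T.subtree W u) u := by
  intro w hw hwu
  obtain ⟨hwW, hanc⟩ := mem_subtree.1 hw
  exact ⟨fun hwr => hwu (hwr.trans (hwr ▸ hanc).eq_root.symm),
    mem_subtree.2 ⟨hW w hwW, hanc.parent_of_ne hwu⟩⟩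

theorem ParentClosed.exists_minimal_heavy_subtree (hW : T.ParentClosed W) (hcard : r < #W) :
    ∃ u ∈ W, r < #(T.subtree W u) ∧
      ∀ c ∈ W, T.parent c = u → c ≠ u → #(T.subtree W c) ≤ r := by
  obtain ⟨w, hw⟩ := card_pos.1 (r.zero_le.trans_lt hcard)
  have hroot : T.root ∈ {u ∈ W | r < #(T.subtree W u)} :=
    mem_filter.2 ⟨hW.root_mem hw, by rwa [subtree_root]⟩
  obtain ⟨u, hu, hmax⟩ := exists_max_image _ (G.dist T.root) ⟨_, hroot⟩
  obtain ⟨huW, hu⟩ := mem_filter.1 hu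
  refine ⟨u, huW, hu, fun c hcW hcu hne => ?_⟩
  by_contra! hc
  have hanc : T.IsAncestor u c := ⟨1, hcu⟩
  exact (hanc.dist_root_lt hne.symm).not_ge (hmax c (mem_filter.2 ⟨hcW, hc⟩))

variable [DecidableEq V]

theorem ParentClosed.sdiff (hW : T.ParentClosed W) (hP : ∀ w ∈ W, T.parent w ∈ P → w ∈ P) :
    T.ParentClosed (W \ P) := by
  intro w hw
  obtain ⟨hwW, hwP⟩ := mem_sdiff.1 hw
  exact mem_sdiff.2 ⟨hW w hwW, fun h => hwP (hP w hwW h)⟩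

theorem ParentClosed.sdiff_subtree (hW : T.ParentClosed W) :
    T.ParentClosed (W \ T.subtree W u) :=
  hW.sdiff fun _ hw => mem_subtree_of_parent_mem hw

theorem HangsFrom.dist_add_one_le_card (hW : T.HangsFrom W u) {x y : V} (hx : x ∈ W)
    (hy : y ∈ W) : G.dist x y + 1 ≤ #W := by
  induction W using Finset.strongInduction generalizing x y with
  | H W ih =>
  rcases (W.erase u).eq_empty_or_nonempty with hWu | hWu
  · obtain rfl | rfl := (erase_eq_empty_iff W u).1 hWu
    · simp at hx
    · simp [mem_singleton.1 hx, mem_singleton.1 hy]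
  -- A deepest vertex `ℓ ≠ u` of `W` is a leaf, and removing it keeps `W` hanging from `u`.
  obtain ⟨ℓ, hℓ, hmax⟩ := exists_max_image (W.erase u) (G.dist T.root) hWu
  obtain ⟨hℓu, hℓW⟩ := mem_erase.1 hℓ
  obtain ⟨hℓr, hpℓ⟩ := hW ℓ hℓW hℓu
  have hW' : T.HangsFrom (W.erase ℓ) u := by
    intro w hw hwu
    obtain ⟨hwℓ, hwW⟩ := mem_erase.1 hw
    obtain ⟨hwr, hpw⟩ := hW w hwW hwu
    refine ⟨hwr, mem_erase.2 ⟨fun h => ?_, hpw⟩⟩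
    have := hmax w (mem_erase.2 ⟨hwu, hwW⟩)
    have := h ▸ T.dist_parent_lt w hwr
    omega
  have hcard : #(W.erase ℓ) + 1 = #W := card_erase_add_one hℓW
  have ih' := fun {x y} => ih _ (erase_ssubset hℓW) hW' (x := x) (y := y)
  have hfar : ∀ y ∈ W.erase ℓ, G.dist ℓ y + 1 ≤ #W := fun y hy => by
    have := T.dist_le_dist_parent_add_one hℓr y
    have := ih' (mem_erase.2 ⟨parent_ne_self hℓr, hpℓ⟩) hy
    omega
  by_cases hxℓ : x = ℓ <;> by_cases hyℓ : y = ℓ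
  · rw [hxℓ, hyℓ, SimpleGraph.dist_self]
    exact card_pos.2 ⟨ℓ, hℓW⟩
  · exact hxℓ ▸ hfar y (mem_erase.2 ⟨hyℓ, hy⟩)
  · rw [hyℓ, SimpleGraph.dist_comm]
    exact hfar x (mem_erase.2 ⟨hxℓ, hx⟩)
  · have := ih' (mem_erase.2 ⟨hxℓ, hx⟩) (mem_erase.2 ⟨hyℓ, hy⟩)
    omega

theorem ParentClosed.dist_le_of_mem_subtree_child (hW : T.ParentClosed W) {c : V}
    (hcu : T.parent c = u) (hne : c ≠ u) (hc : #(T.subtree W c) ≤ r)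
    (hw : w ∈ T.subtree W c) : G.dist u w ≤ r := by
  have hcr := ne_root_of_parent_eq hcu hne
  have := hcu ▸ T.dist_parent_le_add_one hcr w
  have hcW : c ∈ W := hW.mem_of_isAncestor (subtree_subset hw) (mem_subtree.1 hw).2
  have := hW.hangsFrom_subtree.dist_add_one_le_card (mem_subtree.2 ⟨hcW, isAncestor_refl c⟩) hw
  omega

theorem ParentClosed.dist_le_of_mem_subtree (hW : T.ParentClosed W)
    (hchild : ∀ c ∈ W, T.parent c = u → c ≠ u → #(T.subtree W c) ≤ r)
    (hw : w ∈ T.subtree W u) : G.dist u w ≤ r := by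
  obtain ⟨hwW, hanc⟩ := mem_subtree.1 hw
  rcases eq_or_ne w u with rfl | hwu
  · simp
  obtain ⟨c, hcu, hne, hcw⟩ := hanc.exists_child hwu
  exact hW.dist_le_of_mem_subtree_child hcu hne
    (hchild c (hW.mem_of_isAncestor hwW hcw) hcu hne) (mem_subtree.2 ⟨hwW, hcw⟩)

theorem ParentClosed.exists_center (hW : T.ParentClosed W) (hcard : #W ≤ 2 * r + 1) :
    ∃ u, ∀ w ∈ W, G.dist u w ≤ r := by
  by_cases hsmall : #W ≤ r
  · refine ⟨T.root, fun w hw => ?_⟩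
    have := hW.hangsFrom_root.dist_add_one_le_card (hW.root_mem hw) hw
    omega
  obtain ⟨u, huW, hu, hchild⟩ := hW.exists_minimal_heavy_subtree (not_le.1 hsmall)
  refine ⟨u, fun w hw => ?_⟩
  by_cases hwu : w ∈ T.subtree W u
  · exact hW.dist_le_of_mem_subtree hchild hwu
  have hur : u ≠ T.root := by
    rintro rfl
    exact hwu (subtree_root.symm ▸ hw)
  -- The rest of `W` is parent-closed, contains `parent u` and has at most `r` vertices.
  have hpu : T.parent u ∈ W \ T.subtree W u := by
    refine mem_sdiff.2 ⟨hW u huW, fun h => ?_⟩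
    exact (T.dist_parent_lt u hur).not_ge (mem_subtree.1 h).2.dist_root_le
  have := hW.sdiff_subtree.hangsFrom_root.dist_add_one_le_card hpu (mem_sdiff.2 ⟨hw, hwu⟩)
  have := card_sdiff_of_subset (subtree_subset (T := T) (W := W) (u := u))
  have := card_le_card (subtree_subset (T := T) (W := W) (u := u))
  have := T.dist_le_dist_parent_add_one hur w
  omega

theorem ParentClosed.exists_piece (hW : T.ParentClosed W) (hcard : r < #W) :
    ∃ P ⊆ W, ∃ u, r < #P ∧ #P ≤ 2 * r + 1 ∧ (∀ w ∈ P, G.dist u w ≤ r) ∧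
      T.ParentClosed (W \ P) := by
  obtain ⟨u, huW, hu, hchild⟩ := hW.exists_minimal_heavy_subtree hcard
  by_cases hsmall : #(T.subtree W u) ≤ 2 * r + 1
  · exact ⟨_, subtree_subset, u, hu, hsmall, fun w hw => hW.dist_le_of_mem_subtree hchild hw,
      hW.sdiff_subtree⟩
  set C := {c ∈ W | T.parent c = u ∧ c ≠ u}
  have hcover : (T.subtree W u).erase u ⊆ C.biUnion (T.subtree W) := by
    intro w hw
    obtain ⟨hwu, hw⟩ := mem_erase.1 hw
    obtain ⟨hwW, hanc⟩ := mem_subtree.1 hw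
    obtain ⟨c, hcu, hne, hcw⟩ := hanc.exists_child hwu
    exact mem_biUnion.2 ⟨c, mem_filter.2 ⟨hW.mem_of_isAncestor hwW hcw, hcu, hne⟩,
      mem_subtree.2 ⟨hwW, hcw⟩⟩
  have hlarge : r < #(C.biUnion (T.subtree W)) := by
    have := card_le_card hcover
    rw [card_erase_of_mem (mem_subtree.2 ⟨huW, isAncestor_refl u⟩)] at this
    omega
  have hC : ∀ c ∈ C, c ∈ W ∧ T.parent c = u ∧ c ≠ u := fun c hc => mem_filter.1 hc
  obtain ⟨s, hsC, hs_gt, hs_le⟩ := exists_subset_card_biUnion_mem_Ioc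
    (fun c hc => hchild c (hC c hc).1 (hC c hc).2.1 (hC c hc).2.2) hlarge
  refine ⟨s.biUnion (T.subtree W), biUnion_subset.2 fun _ _ => subtree_subset, u, hs_gt,
    by omega, fun w hw => ?_, hW.sdiff fun w hwW hpw => ?_⟩
  · obtain ⟨c, hc, hwc⟩ := mem_biUnion.1 hw
    obtain ⟨hcW, hcu, hne⟩ := hC c (hsC hc)
    exact hW.dist_le_of_mem_subtree_child hcu hne (hchild c hcW hcu hne) hwc
  · obtain ⟨c, hc, hpc⟩ := mem_biUnion.1 hpw
    exact mem_biUnion.2 ⟨c, hc, mem_subtree_of_parent_mem hwW hpc⟩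

theorem ParentClosed.exists_partition (k : ℕ) (hW : T.ParentClosed W)
    (hcard : #W ≤ (k + 2) * r + k + 1) :
    ∃ (c : Fin (k + 1) → V) (R : V → Fin (k + 1)),
      (∀ w ∈ W, G.dist (c (R w)) w ≤ r) ∧ ∀ j, #{w ∈ W | R w = j} ≤ 2 * r + 1 := by
  induction k generalizing W with
  | zero =>
    obtain ⟨u, hu⟩ := hW.exists_center (by omega)
    exact ⟨fun _ => u, fun _ => 0, hu, fun _ => (card_filter_le _ _).trans (by omega)⟩
  | succ k ih =>
    by_cases hsmall : #W ≤ 2 * r + 1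
    · obtain ⟨u, hu⟩ := hW.exists_center hsmall
      exact ⟨fun _ => u, fun _ => 0, hu, fun _ => (card_filter_le _ _).trans hsmall⟩
    obtain ⟨P, hPW, u, hP_gt, hP_le, hPu, hrest⟩ := hW.exists_piece (r := r) (by omega)
    obtain ⟨c, R, hcR, hR⟩ := ih hrest (by
      rw [card_sdiff_of_subset hPW]
      have : (k + 1 + 2) * r = (k + 2) * r + r := by ring
      omega)
    refine ⟨Fin.cons u c, fun w => if w ∈ P then 0 else (R w).succ, fun w hw => ?_, fun j => ?_⟩
    · by_cases hwP : w ∈ P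
      · simpa [hwP] using hPu w hwP
      · simpa [hwP] using hcR w (mem_sdiff.2 ⟨hw, hwP⟩)
    · refine Fin.cases ((card_le_card fun w hw => ?_).trans hP_le)
        (fun j => (card_le_card fun w hw => ?_).trans (hR j)) j
      · by_contra hwP
        simp [hwP] at hw
      · obtain ⟨hwW, hwj⟩ := mem_filter.1 hw
        have hwP : w ∉ P := fun hwP => Fin.succ_ne_zero j (by simpa [hwP] using hwj.symm)
        simp only [hwP, if_false, Fin.succ_inj] at hwj
        exact mem_filter.2 ⟨mem_sdiff.2 ⟨hwW, hwP⟩, hwj⟩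
end ShortestPathTree

theorem SimpleGraph.Connected.exists_partition {V : Type*} [Fintype V] [DecidableEq V]
    {G : SimpleGraph V} (hG : G.Connected) {k : ℕ} (hk : 0 < k) (r : ℕ)
    (hcard : Fintype.card V ≤ (k + 1) * r + k) :
    ∃ (c : Fin k → V) (R : V → Fin k),
      (∀ v, G.dist (c (R v)) v ≤ r) ∧ ∀ j, #{v | R v = j} ≤ 2 * r + 1 := by
  obtain ⟨T⟩ := hG.nonempty_shortestPathTree
  obtain ⟨k, rfl⟩ := Nat.exists_eq_add_one_of_ne_zero hk.ne'
  have huniv : T.ParentClosed univ := fun w _ => mem_univ _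
  obtain ⟨c, R, hcR, hR⟩ := huniv.exists_partition (r := r) k (by
      rw [card_univ]
      have : (k + 1 + 1) * r = (k + 2) * r := by ring
      omega)
  exact ⟨c, R, fun v => hcR v (mem_univ v), hR⟩

theorem exists_injective_prod_fin_of_card_fiber_le {V ι : Type*} [Fintype V] [DecidableEq ι]
    (R : V → ι) {M : ℕ} (hR : ∀ j, #{v | R v = j} ≤ M) :
    ∃ idx : V → Fin M, Function.Injective fun v => (R v, idx v) := by
  have e : ∀ j, {v // R v = j} ↪ Fin M := fun j =>
    (Function.Embedding.nonempty_of_card_le (by simpa [Fintype.card_subtype] using hR j)).some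
  refine ⟨fun v => e (R v) ⟨v, rfl⟩, ?_⟩
  intro u v h
  obtain ⟨hR, he⟩ := Prod.ext_iff.1 h
  have transport : ∀ {j j'} (hj : j = j') (x : V) (hx : R x = j),
      e j ⟨x, hx⟩ = e j' ⟨x, hx.trans hj⟩ := by
    rintro j _ rfl x hx
    rfl
  exact congrArg Subtype.val ((e (R u)).injective (he.trans (transport hR.symm v rfl)))

theorem exists_response_functions {V ι κ : Type*} {G : SimpleGraph V} (c : ι → V) (R : V → ι)
    (idx : V → κ) (hinj : Function.Injective fun v => (R v, idx v)) {r : ℕ}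
    (hc : ∀ v, G.dist (c (R v)) v ≤ r) :
    ∃ f : ι → V → V, (∀ j v, G.dist (c j) (f j v) ≤ r) ∧
      ∀ v w, idx w = idx v → f (R w) v = w := by
  classical
  refine ⟨fun j v => if h : ∃ w, R w = j ∧ idx w = idx v then h.choose else c j,
    fun j v => ?_, fun v w hw => ?_⟩
  · dsimp only
    split_ifs with h
    · simpa [h.choose_spec.1] using hc h.choose
    · simp
  · have h : ∃ u, R u = R w ∧ idx u = idx v := ⟨w, rfl, hw⟩
    dsimp only
    rw [dif_pos h]
    exact hinj (Prod.ext h.choose_spec.1 (h.choose_spec.2.trans hw.symm))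

theorem ENNReal.mul_tsum_pow_succ_one_sub_le {q : ℝ≥0∞} (hq : q ≤ 1) :
    q * ∑' s : ℕ, (1 - q) ^ (s + 1) ≤ 1 - q := by
  rcases eq_or_ne q 0 with rfl | hq0
  · simp
  rw [ENNReal.tsum_geometric_add_one, ENNReal.sub_sub_cancel ENNReal.one_ne_top hq,
    mul_comm, mul_assoc, ENNReal.inv_mul_cancel hq0 (hq.trans_lt ENNReal.one_lt_top).ne, mul_one]

theorem ENNReal.natCast_div_le (a b : ℕ) : ((a / b : ℕ) : ℝ≥0∞) ≤ a / b := by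
  rcases eq_or_ne b 0 with rfl | hb
  · simp
  rw [ENNReal.le_div_iff_mul_le (.inl (by simpa using hb)) (.inl (by simp))]
  exact_mod_cast Nat.div_mul_le_self a b

theorem le_add_tsum_indicator_of_le {α : Type*} {N : ℕ → Set α} {a : α} {m : ℕ} {τ : ℝ≥0∞}
    (h : ∀ s, a ∉ N s → τ ≤ m + s) : τ ≤ m + ∑' s, (N s).indicator 1 a := by
  classical
  by_cases hall : ∀ s, a ∈ N s
  · have : ∑' s, (N s).indicator 1 a = ∞ := by
      simp [Set.indicator_of_mem (hall _)]
    simp [this]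
  push Not at hall
  have hcount : (Nat.find hall : ℝ≥0∞) ≤ ∑' s, (N s).indicator 1 a :=
    calc (Nat.find hall : ℝ≥0∞) = ∑ s ∈ range (Nat.find hall), (N s).indicator 1 a := by
          rw [sum_congr rfl fun s hs => Set.indicator_of_mem
            (not_not.1 (Nat.find_min hall (mem_range.1 hs))) 1]
          simp
      _ ≤ _ := ENNReal.sum_le_tsum _
  exact (h _ (Nat.find_spec hall)).trans (by gcongr)

section Return

variable {Ω κ : Type*} [MeasurableSpace Ω] [MeasurableSpace κ]
  [MeasurableSingletonClass κ] {μ : Measure Ω} [IsProbabilityMeasure μ] {ν : Measure κ}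
  {Y : ℕ → Ω → κ}

theorem measure_preimage_inter_iInter_preimage_compl (hY : ∀ t, Measurable (Y t))
    (hind : iIndepFun Y μ) (hlaw : ∀ t, μ.map (Y t) = ν) {S : Finset ℕ} (hS : 0 ∉ S) (i : κ) :
    μ (Y 0 ⁻¹' {i} ∩ ⋂ t ∈ S, Y t ⁻¹' {i}ᶜ) = ν {i} * (1 - ν {i}) ^ #S := by
  have hlaw' : ∀ t (B : Set κ), MeasurableSet B → μ (Y t ⁻¹' B) = ν B := fun t B hB => by
    rw [← hlaw t, Measure.map_apply (hY t) hB]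
  set B : ℕ → Set κ := fun t => if t = 0 then {i} else {i}ᶜ
  have hB : ∀ t ∈ S, B t = {i}ᶜ := fun t ht => if_neg (ne_of_mem_of_not_mem ht hS)
  have h := hind.measure_inter_preimage_eq_mul (insert 0 S) (sets := B)
    fun t _ => by by_cases ht : t = 0 <;> simp [B, ht]
  rw [Finset.set_biInter_insert, prod_insert hS, prod_congr rfl fun t ht => by rw [hB t ht]] at h
  rw [Set.iInter₂_congr fun t ht => by rw [hB t ht], show B 0 = {i} from if_pos rfl] at h
  have hcompl : ∀ t, μ (Y t ⁻¹' {i}ᶜ) = 1 - ν {i} := fun t => by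
    rw [Set.preimage_compl, prob_compl_eq_one_sub ((measurableSet_singleton i).preimage (hY t)),
      hlaw' t _ (measurableSet_singleton i)]
  rw [h, hlaw' 0 _ (measurableSet_singleton i), prod_congr rfl fun t _ => hcompl t, prod_const]

theorem lintegral_le_add_card_of_iIndepFun [Fintype κ] (hY : ∀ t, Measurable (Y t))
    (hind : iIndepFun Y μ) (hlaw : ∀ t, μ.map (Y t) = ν) {m : ℕ} {T : Ω → ℝ≥0∞}
    (hT : ∀ ω t, m < t → Y t ω = Y 0 ω → T ω ≤ t) :
    ∫⁻ ω, T ω ∂μ ≤ m + Fintype.card κ := by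
  set A : ℕ → κ → Set Ω := fun s i => Y 0 ⁻¹' {i} ∩ ⋂ t ∈ Ioc m (m + 1 + s), Y t ⁻¹' {i}ᶜ
  have hA : ∀ s i, MeasurableSet (A s i) := fun s i =>
    ((measurableSet_singleton i).preimage (hY 0)).inter (.biInter (Set.to_countable _)
      fun t _ => (measurableSet_singleton i).compl.preimage (hY t))
  set N : ℕ → Set Ω := fun s => ⋃ i, A s i
  have hN : ∀ s, MeasurableSet (N s) := fun s => .iUnion (hA s)
  have hμN : ∀ s, μ (N s) = ∑ i, ν {i} * (1 - ν {i}) ^ (s + 1) := fun s => by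
    rw [measure_iUnion (fun i i' hii' => Set.disjoint_left.2 fun ω h h' =>
      hii' (h.1.symm.trans h'.1)) (hA s), tsum_fintype]
    refine sum_congr rfl fun i _ => ?_
    rw [measure_preimage_inter_iInter_preimage_compl hY hind hlaw (by simp) i, Nat.card_Ioc]
    congr 2
    omega
  have hpt : ∀ ω, T ω ≤ (m + 1 : ℕ) + ∑' s, (N s).indicator 1 ω := fun ω =>
    le_add_tsum_indicator_of_le fun s hω => by
      simp only [N, A, Set.mem_iUnion, Set.mem_inter_iff, Set.mem_preimage, Set.mem_singleton_iff,
        Set.mem_iInter, Set.mem_compl_iff, not_exists, not_and, not_forall, not_not] at hω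
      obtain ⟨t, ht, hYt⟩ := hω _ rfl
      exact (hT ω t (mem_Ioc.1 ht).1 hYt).trans (by exact_mod_cast (mem_Ioc.1 ht).2)
  have hprob : ∑ i, ν {i} = 1 := by
    rw [sum_measure_singleton, coe_univ, ← hlaw 0, Measure.map_apply (hY 0) MeasurableSet.univ,
      Set.preimage_univ, measure_univ]
  have hle_one : ∀ i, ν {i} ≤ 1 := fun i =>
    (single_le_sum (f := fun j => ν {j}) (fun _ _ => zero_le) (mem_univ i)).trans_eq hprob
  calc ∫⁻ ω, T ω ∂μ ≤ ∫⁻ ω, (m + 1 : ℕ) + ∑' s, (N s).indicator 1 ω ∂μ := lintegral_mono hpt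
    _ = (m + 1 : ℕ) + ∑' s, μ (N s) := by
      rw [lintegral_add_left measurable_const, lintegral_const, measure_univ, mul_one,
        lintegral_tsum fun s => (measurable_one.indicator (hN s)).aemeasurable]
      simp_rw [lintegral_indicator_one (hN _)]
    _ = (m + 1 : ℕ) + ∑ i, ν {i} * ∑' s : ℕ, (1 - ν {i}) ^ (s + 1) := by
      simp_rw [hμN]
      rw [Summable.tsum_finsetSum fun _ _ => ENNReal.summable]
      simp_rw [ENNReal.tsum_mul_left]
    _ ≤ (m + 1 : ℕ) + ∑ i, (1 - ν {i}) := by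
      gcongr with i
      exact ENNReal.mul_tsum_pow_succ_one_sub_le (hle_one i)
    _ = m + Fintype.card κ := by
      rw [show ((m + 1 : ℕ) : ℝ≥0∞) = m + ∑ i, ν {i} by rw [hprob]; push_cast; rfl, add_assoc,
        ← sum_add_distrib]
      simp [add_tsub_cancel_of_le (hle_one _)]

end Return

/-- A distributed Watch-Move-Wait strategy for `k` cops against the
1-observed gambler on a connected `n`-vertex graph achieves expected capture time
at most `3n/(k+1) + 1`. -/
theorem distributed_wmw1_expected_capture_time_le
    {V : Type*} [Fintype V] [DecidableEq V]
    [MeasurableSpace V] [MeasurableSingletonClass V]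
    (G : SimpleGraph V) (hG : G.Connected)
    (n : ℕ) (hn : Fintype.card V = n)
    (k : ℕ) (hk : 0 < k) :
    ∃ (c : Fin k → V) (f : Fin k → V → V),
      (∀ j v, G.dist (c j) (f j v) ≤ n / (k + 1)) ∧
      ∀ (p : PMF V) (Ω : Type) (_ : MeasurableSpace Ω) (μ : Measure Ω)
        (_ : IsProbabilityMeasure μ) (X : ℕ → Ω → V),
        (∀ t, Measurable (X t)) →
        iIndepFun X μ →
        (∀ t, μ.map (X t) = p.toMeasure) →
        ∀ T : Ω → ℝ≥0∞,
        (∀ ω, T ω = sInf {τ : ℝ≥0∞ | ∃ t : ℕ, τ = t ∧ 1 ≤ t ∧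
          ∃ j : Fin k, G.dist (c j) (f j (X 0 ω)) ≤ t ∧ X t ω = f j (X 0 ω)}) →
        ∫⁻ ω, T ω ∂μ ≤ 3 * (n : ℝ≥0∞) / ((k : ℝ≥0∞) + 1) + 1 := by
  have hcard : Fintype.card V ≤ (k + 1) * (n / (k + 1)) + k := by
    have := Nat.div_add_mod n (k + 1)
    have := Nat.mod_lt n (by omega : 0 < k + 1)
    omega
  set r := n / (k + 1)
  obtain ⟨c, R, hcR, hR⟩ := hG.exists_partition hk r hcard
  obtain ⟨idx, hinj⟩ := exists_injective_prod_fin_of_card_fiber_le R hR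
  obtain ⟨f, hf, hfR⟩ := exists_response_functions c R idx hinj hcR
  refine ⟨c, f, hf, fun p Ω _ μ _ X hX hind hlaw T hT => ?_⟩
  have hcapture : ∀ ω t, r < t → idx (X t ω) = idx (X 0 ω) → T ω ≤ t := fun ω t hrt h => by
    rw [hT ω]
    exact sInf_le ⟨t, rfl, by omega, R (X t ω), (hf _ _).trans hrt.le, (hfR _ _ h).symm⟩
  have hidx : Measurable idx := measurable_of_countable idx
  calc ∫⁻ ω, T ω ∂μ ≤ r + Fintype.card (Fin (2 * r + 1)) :=
        lintegral_le_add_card_of_iIndepFun (fun t => hidx.comp (hX t))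
          (hind.comp _ fun _ => hidx)
          (fun t => by rw [← Measure.map_map hidx (hX t), hlaw t]) hcapture
    _ ≤ 3 * n / (k + 1) + 1 := by
      rw [Fintype.card_fin, Nat.cast_add, Nat.cast_mul, Nat.cast_one, ← add_assoc,
        ← one_add_mul, mul_div_assoc]
      gcongr
      · norm_num
      · exact_mod_cast ENNReal.natCast_div_le n (k + 1)
end

section
/- Let V be a finite set with |V| = n ≥ 1, let k be a positive integer, and let A : ℕ → (finite subsets of V) be any sequence of subsets with |A_t| ≤ k for every t. Let (X_t)_{t≥1} be i.i.d. random variables uniformly distributed on V, and let T = min{ t ≥ 1 : X_t ∈ A_t } (with T = ∞ if no such t exists). Then E[T] ≥ n/k, and consequently k + E[T] ≥ 2√n. -/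
/-! Each turn the uniform gambler avoids the at most `k` occupied vertices with probability at
least `1 - k/n`, independently of the other turns, so it is still free after `t` turns with
probability at least `(1 - k/n)^t`. Summing these tail probabilities bounds `E[T]` below by the
geometric series `∑ (1 - k/n)^t ≥ n/k`, and `k + n/k ≥ 2√n` is AM-GM. -/

open MeasureTheory ProbabilityTheory
open scoped ENNReal

-- Counting `t + 1 ≤ x` rather than `t < x` makes this hold for non-integral `x` as well.
lemma ENNReal.tsum_ite_add_one_le_le_self (x : ℝ≥0∞) :
    ∑' t : ℕ, (if (t + 1 : ℝ≥0∞) ≤ x then 1 else 0) ≤ x := by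
  refine ENNReal.tsum_le_of_sum_range_le fun N => ?_
  induction N with
  | zero => simp
  | succ N ih =>
    by_cases hN : (N + 1 : ℝ≥0∞) ≤ x
    · calc _ ≤ ∑ _t ∈ Finset.range (N + 1), (1 : ℝ≥0∞) :=
            Finset.sum_le_sum fun _ _ => ite_le_one le_rfl zero_le_one
        _ ≤ x := by simpa using hN
    · rwa [Finset.sum_range_succ, if_neg hN, add_zero]

lemma tsum_measure_le_lintegral {Ω : Type*} [MeasurableSpace Ω] {μ : Measure Ω}
    {f : Ω → ℝ≥0∞} {S : ℕ → Set Ω} (hS : ∀ t, MeasurableSet (S t))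
    (hf : ∀ t, ∀ ω ∈ S t, (t + 1 : ℝ≥0∞) ≤ f ω) :
    ∑' t, μ (S t) ≤ ∫⁻ ω, f ω ∂μ := by
  have hpointwise : ∀ ω, ∑' t, (S t).indicator 1 ω ≤ f ω := fun ω =>
    calc ∑' t, (S t).indicator 1 ω
        ≤ ∑' t : ℕ, (if (t + 1 : ℝ≥0∞) ≤ f ω then 1 else 0) := by
          refine ENNReal.tsum_le_tsum fun t => ?_
          by_cases hω : ω ∈ S t
          · simp [hω, hf t ω hω]
          · simp [hω]
      _ ≤ f ω := ENNReal.tsum_ite_add_one_le_le_self (f ω)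
  calc ∑' t, μ (S t) = ∑' t, ∫⁻ ω, (S t).indicator 1 ω ∂μ := by
        simp only [lintegral_indicator_one (hS _)]
    _ = ∫⁻ ω, ∑' t, (S t).indicator 1 ω ∂μ :=
        (lintegral_tsum fun t => (measurable_one.indicator (hS t)).aemeasurable).symm
    _ ≤ ∫⁻ ω, f ω ∂μ := lintegral_mono hpointwise

lemma ENNReal.inv_le_tsum_one_sub_pow (r : ℝ≥0∞) : r⁻¹ ≤ ∑' t : ℕ, (1 - r) ^ t := by
  rw [ENNReal.tsum_geometric]
  exact ENNReal.inv_le_inv.mpr tsub_tsub_le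

lemma two_mul_sqrt_le_add_div {x y : ℝ} (hx : 0 ≤ x) (hy : 0 < y) :
    2 * √x ≤ y + x / y := by
  have hsq : √x ^ 2 = x := Real.sq_sqrt hx
  have hsquare : y + x / y - 2 * √x = (y - √x) ^ 2 / y := by
    field_simp
    linear_combination -hsq
  rw [← sub_nonneg, hsquare]
  positivity

lemma ENNReal.ofReal_two_mul_sqrt_le_add_div (n : ℕ) {k : ℕ} (hk : 0 < k) :
    ENNReal.ofReal (2 * √n) ≤ k + n / k := by
  have hdiv : (n : ℝ≥0∞) / k = ENNReal.ofReal (n / k) := by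
    rw [ENNReal.ofReal_div_of_pos (by exact_mod_cast hk)]
    simp
  rw [hdiv, ← ENNReal.ofReal_natCast k, ← ENNReal.ofReal_add (by positivity) (by positivity)]
  exact ENNReal.ofReal_le_ofReal (two_mul_sqrt_le_add_div n.cast_nonneg (by exact_mod_cast hk))

section UniformGambler

variable {V Ω : Type*}

def uncaughtUntil (X : ℕ → Ω → V) (A : ℕ → Finset V) (t : ℕ) : Set Ω :=
  ⋂ s ∈ Finset.Icc 1 t, X s ⁻¹' (A s : Set V)ᶜ

lemma natCast_add_one_le_sInf_of_mem_uncaughtUntil {X : ℕ → Ω → V} {A : ℕ → Finset V}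
    {t : ℕ} {ω : Ω} (hω : ω ∈ uncaughtUntil X A t) : (t + 1 : ℝ≥0∞) ≤
      sInf {τ : ℝ≥0∞ | ∃ s : ℕ, τ = s ∧ 1 ≤ s ∧ X s ω ∈ A s} := by
  simp only [uncaughtUntil, Set.mem_iInter, Finset.mem_Icc, Set.mem_preimage,
    Set.mem_compl_iff, Finset.mem_coe] at hω
  refine le_sInf ?_
  rintro _ ⟨s, rfl, hs, hcaught⟩
  have hts : t < s := lt_of_not_ge fun hst => hω s ⟨hs, hst⟩ hcaught
  exact_mod_cast hts

variable [MeasurableSpace V] [MeasurableSingletonClass V] [MeasurableSpace Ω]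

lemma measurableSet_uncaughtUntil {X : ℕ → Ω → V} (hX : ∀ t, Measurable (X t))
    (A : ℕ → Finset V) (t : ℕ) : MeasurableSet (uncaughtUntil X A t) :=
  Finset.measurableSet_biInter _ fun s _ => hX s (A s).measurableSet.compl

variable [Fintype V] [Nonempty V] {μ : Measure Ω}

lemma measure_preimage_finset_of_map_eq_uniform {Y : Ω → V} (hY : Measurable Y)
    (hlaw : μ.map Y = (PMF.uniformOfFintype V).toMeasure) (s : Finset V) :
    μ (Y ⁻¹' s) = s.card / Fintype.card V := by
  rw [← Measure.map_apply hY s.measurableSet, hlaw,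
    PMF.toMeasure_uniformOfFintype_apply _ s.measurableSet]
  simp

lemma one_sub_div_le_measure_preimage_compl [IsProbabilityMeasure μ] {Y : Ω → V}
    (hY : Measurable Y) (hlaw : μ.map Y = (PMF.uniformOfFintype V).toMeasure)
    {s : Finset V} {k : ℕ} (hs : s.card ≤ k) :
    1 - k / Fintype.card V ≤ μ (Y ⁻¹' (s : Set V)ᶜ) := by
  rw [Set.preimage_compl, measure_compl (hY s.measurableSet) (measure_ne_top μ _), measure_univ,
    measure_preimage_finset_of_map_eq_uniform hY hlaw]
  gcongr

lemma one_sub_div_pow_le_measure_uncaughtUntil [IsProbabilityMeasure μ] {X : ℕ → Ω → V}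
    (hX : ∀ t, Measurable (X t)) (hindep : iIndepFun X μ)
    (hlaw : ∀ t, μ.map (X t) = (PMF.uniformOfFintype V).toMeasure)
    {A : ℕ → Finset V} {k : ℕ} (hA : ∀ t, (A t).card ≤ k) (t : ℕ) :
    (1 - (k : ℝ≥0∞) / Fintype.card V) ^ t ≤ μ (uncaughtUntil X A t) := by
  rw [uncaughtUntil,
    hindep.measure_inter_preimage_eq_mul _ fun s _ => (A s).measurableSet.compl]
  simpa using Finset.pow_card_le_prod (Finset.Icc 1 t) _ _ fun s _ =>
    one_sub_div_le_measure_preimage_compl (hX s) (hlaw s) (hA s)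

end UniformGambler

theorem uniform_gambler_throttling_lower_bound_general
    {V : Type*} [Fintype V] [Nonempty V]
    [MeasurableSpace V] [MeasurableSingletonClass V]
    (n : ℕ) (hn : Fintype.card V = n)
    (k : ℕ) (hk : 0 < k)
    (A : ℕ → Finset V) (hA : ∀ t, (A t).card ≤ k)
    {Ω : Type*} [MeasurableSpace Ω] (μ : Measure Ω) [IsProbabilityMeasure μ]
    (X : ℕ → Ω → V)
    (hmeas : ∀ t, Measurable (X t))
    (hindep : iIndepFun X μ)
    (hlaw : ∀ t, μ.map (X t) = (PMF.uniformOfFintype V).toMeasure)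
    (T : Ω → ℝ≥0∞)
    (hT : ∀ ω, T ω = sInf {τ : ℝ≥0∞ | ∃ t : ℕ, τ = t ∧ 1 ≤ t ∧ X t ω ∈ A t}) :
    (n : ℝ≥0∞) / (k : ℝ≥0∞) ≤ ∫⁻ ω, T ω ∂μ ∧
      ENNReal.ofReal (2 * Real.sqrt n) ≤ (k : ℝ≥0∞) + ∫⁻ ω, T ω ∂μ := by
  have hmain : (n : ℝ≥0∞) / k ≤ ∫⁻ ω, T ω ∂μ :=
    calc (n : ℝ≥0∞) / k = ((k : ℝ≥0∞) / n)⁻¹ :=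
          (ENNReal.inv_div (Or.inr (ENNReal.natCast_ne_top k)) (Or.inr (by positivity))).symm
      _ ≤ ∑' t : ℕ, (1 - (k : ℝ≥0∞) / n) ^ t := ENNReal.inv_le_tsum_one_sub_pow _
      _ ≤ ∑' t, μ (uncaughtUntil X A t) := ENNReal.tsum_le_tsum fun t =>
          hn ▸ one_sub_div_pow_le_measure_uncaughtUntil hmeas hindep hlaw hA t
      _ ≤ ∫⁻ ω, T ω ∂μ := tsum_measure_le_lintegral (measurableSet_uncaughtUntil hmeas A)
          fun t ω hω => (hT ω).symm ▸ natCast_add_one_le_sInf_of_mem_uncaughtUntil hω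
  exact ⟨hmain, (ENNReal.ofReal_two_mul_sqrt_le_add_div n hk).trans (add_le_add_right hmain _)⟩

/-- Against a uniform gambler on an `n`-element vertex set, any sequence
of cop positions occupying at most `k` vertices per turn has expected capture time at
least `n/k`; consequently `k + E[T] ≥ 2√n`. -/
theorem uniform_gambler_throttling_lower_bound
    {V : Type*} [Fintype V] [DecidableEq V] [Nonempty V]
    [MeasurableSpace V] [MeasurableSingletonClass V]
    (n : ℕ) (hn : Fintype.card V = n) (hn1 : 1 ≤ n)
    (k : ℕ) (hk : 0 < k)
    (A : ℕ → Finset V) (hA : ∀ t, (A t).card ≤ k)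
    {Ω : Type*} [MeasurableSpace Ω] (μ : Measure Ω) [IsProbabilityMeasure μ]
    (X : ℕ → Ω → V)
    (hmeas : ∀ t, Measurable (X t))
    (hindep : iIndepFun X μ)
    (hlaw : ∀ t, μ.map (X t) = (PMF.uniformOfFintype V).toMeasure)
    (T : Ω → ℝ≥0∞)
    (hT : ∀ ω, T ω = sInf {τ : ℝ≥0∞ | ∃ t : ℕ, τ = t ∧ 1 ≤ t ∧ X t ω ∈ A t}) :
    (n : ℝ≥0∞) / (k : ℝ≥0∞) ≤ ∫⁻ ω, T ω ∂μ ∧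
      ENNReal.ofReal (2 * Real.sqrt n) ≤ (k : ℝ≥0∞) + ∫⁻ ω, T ω ∂μ :=
  uniform_gambler_throttling_lower_bound_general n hn k hk A hA μ X hmeas hindep hlaw T hT
end

section
/- For all sufficiently large n the following holds. Let C_n be the cycle graph on n vertices. There exist a positive integer k and cop trajectories γ⁺_1, …, γ⁺_k and γ⁻_1, …, γ⁻_k : ℕ → V(C_n) (each satisfying γ(t+1) = γ(t) or γ(t+1) adjacent to γ(t) for all t, and not depending on the gambler's distribution) such that for every probability distribution p on the vertices and every i.i.d. sequence (X_t)_{t≥1} with law p, the capture times T⁺ = min{ t ≥ 1 : ∃ j, X_t = γ⁺_j(t) } and T⁻ = min{ t ≥ 1 : ∃ j, X_t = γ⁻_j(t) } satisfy k + (E[T⁺] + E[T⁻])/2 < 2.08037·√n. -/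
/-!
Place `k = n / m + 1` cops at spacing `m` around the cycle, all walking clockwise (resp.
counterclockwise). Every vertex is then visited during any `m` consecutive turns, so the
probabilities `u s` that the gambler's vertex is occupied at turn `s` sum to at least `1` over
every such window, and the survival probability `∏_{s ≤ t} (1 - u s) ≤ exp (-∑_{s ≤ t} u s)`
shrinks by a factor `e⁻¹` every `m` turns: `E[T] ≤ (first m survival terms) / (1 - e⁻¹)`.
Moreover the first `r` clockwise turns and the first `m - r` counterclockwise turns together
visit every vertex, so the two survival probabilities `a, b ∈ [0, 1]` at those times satisfy
`a b ≤ e⁻¹`, hence `a + b ≤ 1 + e⁻¹`. Summing over `r` gives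
`E[T⁺] + E[T⁻] ≤ (m + 1) (1 + e⁻¹) / (1 - e⁻¹)`, and `m ≈ (25 / 26) √n` balances this against
`k ≈ n / m`: `26 / 25 + (25 / 52) (1 + e⁻¹) / (1 - e⁻¹) ≈ 2.080362`.
-/

open MeasureTheory ProbabilityTheory Finset Real
open scoped ENNReal

lemma one_sub_exp_neg_one_pos : 0 < 1 - exp (-1) :=
  sub_pos.2 (exp_lt_one_iff.2 neg_one_lt_zero)

noncomputable def survival (u : ℕ → ℝ) (t : ℕ) : ℝ := ∏ s ∈ Ioc 0 t, (1 - u s)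

section Survival

variable {u v : ℕ → ℝ} {m : ℕ}

lemma survival_nonneg (hu : ∀ s, u s ≤ 1) (t : ℕ) : 0 ≤ survival u t :=
  prod_nonneg fun s _ => sub_nonneg.2 (hu s)

lemma survival_le_one (hu₀ : ∀ s, 0 ≤ u s) (hu : ∀ s, u s ≤ 1) (t : ℕ) : survival u t ≤ 1 :=
  prod_le_one (fun s _ => sub_nonneg.2 (hu s)) fun s _ => sub_le_self _ (hu₀ s)

lemma prod_one_sub_le_exp_neg_sum {ι : Type*} (S : Finset ι) {w : ι → ℝ}
    (hw : ∀ i ∈ S, w i ≤ 1) : ∏ i ∈ S, (1 - w i) ≤ exp (-∑ i ∈ S, w i) := by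
  rw [← sum_neg_distrib, exp_sum]
  exact prod_le_prod (fun i hi => sub_nonneg.2 (hw i hi)) fun i _ => by
    linarith [add_one_le_exp (-w i)]

lemma survival_le_exp_neg_sum (hu : ∀ s, u s ≤ 1) (t : ℕ) :
    survival u t ≤ exp (-∑ s ∈ Ioc 0 t, u s) :=
  prod_one_sub_le_exp_neg_sum _ fun s _ => hu s

lemma survival_add_le (hu : ∀ s, u s ≤ 1) {t : ℕ} (hwin : 1 ≤ ∑ s ∈ Ioc t (t + m), u s) :
    survival u (t + m) ≤ exp (-1) * survival u t := by
  have hwindow : ∏ s ∈ Ioc t (t + m), (1 - u s) ≤ exp (-1) := calc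
    _ ≤ exp (-∑ s ∈ Ioc t (t + m), u s) := prod_one_sub_le_exp_neg_sum _ fun s _ => hu s
    _ ≤ exp (-1) := exp_le_exp.2 (neg_le_neg hwin)
  rw [survival, survival, ← prod_Ioc_consecutive _ t.zero_le (t.le_add_right m), mul_comm]
  exact mul_le_mul_of_nonneg_right hwindow (survival_nonneg hu t)

lemma sum_range_survival_le (hu : ∀ s, u s ≤ 1) (hwin : ∀ t, 1 ≤ ∑ s ∈ Ioc t (t + m), u s)
    (N : ℕ) :
    ∑ t ∈ range N, survival u t ≤ (∑ t ∈ range m, survival u t) / (1 - exp (-1)) := by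
  rw [le_div_iff₀ one_sub_exp_neg_one_pos]
  -- `S_N ≤ S_{m+N} = S_m + ∑_{t<N} survival u (m + t) ≤ S_m + e⁻¹ S_N`
  have hmono : ∑ t ∈ range N, survival u t ≤ ∑ t ∈ range (m + N), survival u t :=
    sum_le_sum_of_subset_of_nonneg (range_subset_range.2 (N.le_add_left m))
      fun t _ _ => survival_nonneg hu t
  have hshift : ∑ t ∈ range N, survival u (m + t) ≤ exp (-1) * ∑ t ∈ range N, survival u t := by
    rw [mul_sum]
    exact sum_le_sum fun t _ => add_comm m t ▸ survival_add_le hu (hwin t)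
  rw [sum_range_add] at hmono
  linarith

lemma survival_add_survival_le (hu₀ : ∀ s, 0 ≤ u s) (hu : ∀ s, u s ≤ 1)
    (hv₀ : ∀ s, 0 ≤ v s) (hv : ∀ s, v s ≤ 1) {r r' : ℕ}
    (h : 1 ≤ ∑ s ∈ Ioc 0 r, u s + ∑ s ∈ Ioc 0 r', v s) :
    survival u r + survival v r' ≤ 1 + exp (-1) := by
  have hprod : survival u r * survival v r' ≤ exp (-1) := calc
    _ ≤ exp (-∑ s ∈ Ioc 0 r, u s) * exp (-∑ s ∈ Ioc 0 r', v s) :=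
        mul_le_mul (survival_le_exp_neg_sum hu r) (survival_le_exp_neg_sum hv r')
          (survival_nonneg hv r') (exp_pos _).le
    _ ≤ exp (-1) := by rw [← exp_add]; exact exp_le_exp.2 (by linarith)
  -- `a + b ≤ 1 + a b` for `a, b ∈ [0, 1]`
  nlinarith [mul_nonneg (sub_nonneg.2 (survival_le_one hu₀ hu r))
    (sub_nonneg.2 (survival_le_one hv₀ hv r'))]

lemma sum_range_survival_add_sum_range_survival_le (hu₀ : ∀ s, 0 ≤ u s) (hu : ∀ s, u s ≤ 1)
    (hv₀ : ∀ s, 0 ≤ v s) (hv : ∀ s, v s ≤ 1)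
    (hwu : ∀ t, 1 ≤ ∑ s ∈ Ioc t (t + m), u s) (hwv : ∀ t, 1 ≤ ∑ s ∈ Ioc t (t + m), v s)
    (huv : ∀ r ≤ m, 1 ≤ ∑ s ∈ Ioc 0 r, u s + ∑ s ∈ Ioc 0 (m - r), v s) (N : ℕ) :
    ∑ t ∈ range N, survival u t + ∑ t ∈ range N, survival v t ≤
      (m + 1) * ((1 + exp (-1)) / (1 - exp (-1))) := by
  have hhead : ∑ t ∈ range m, survival u t + ∑ t ∈ range m, survival v t ≤
      (m + 1) * (1 + exp (-1)) := calc
    _ ≤ ∑ r ∈ range (m + 1), survival u r + ∑ r ∈ range (m + 1), survival v (m - r) := by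
        have hreflect : ∑ r ∈ range (m + 1), survival v (m - r) =
            ∑ r ∈ range (m + 1), survival v r := by
          simpa using sum_range_reflect (survival v) (m + 1)
        rw [hreflect, sum_range_succ, sum_range_succ]
        linarith [survival_nonneg hu m, survival_nonneg hv m]
    _ = ∑ r ∈ range (m + 1), (survival u r + survival v (m - r)) := sum_add_distrib.symm
    _ ≤ ∑ r ∈ range (m + 1), (1 + exp (-1)) := sum_le_sum fun r hr =>
        survival_add_survival_le hu₀ hu hv₀ hv (huv r (Nat.lt_succ_iff.1 (mem_range.1 hr)))
    _ = (m + 1) * (1 + exp (-1)) := by simp; ring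
  calc _ ≤ (∑ t ∈ range m, survival u t) / (1 - exp (-1)) +
        (∑ t ∈ range m, survival v t) / (1 - exp (-1)) :=
        add_le_add (sum_range_survival_le hu hwu N) (sum_range_survival_le hv hwv N)
    _ ≤ (m + 1) * (1 + exp (-1)) / (1 - exp (-1)) := by
        rw [← add_div]
        exact div_le_div_of_nonneg_right hhead one_sub_exp_neg_one_pos.le
    _ = _ := mul_div_assoc _ _ _

end Survival

section Capture

lemma sInf_hitting_le_tsum_indicator {Ω : Type*} (E : ℕ → Set Ω) (ω : Ω) :
    sInf {τ : ℝ≥0∞ | ∃ t : ℕ, τ = t ∧ 1 ≤ t ∧ ω ∈ E t} ≤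
      ∑' t, (⋂ s ∈ Ioc 0 t, (E s)ᶜ).indicator 1 ω := by
  classical
  by_cases h : ∃ t, 1 ≤ t ∧ ω ∈ E t
  · have hsurv : ∀ t < Nat.find h, ω ∈ ⋂ s ∈ Ioc 0 t, (E s)ᶜ := by
      simp only [Set.mem_iInter, mem_Ioc, Set.mem_compl_iff]
      exact fun t ht s hs hE => Nat.find_min h (by omega) ⟨hs.1, hE⟩
    calc _ ≤ ((Nat.find h : ℕ) : ℝ≥0∞) := sInf_le (by exact ⟨_, rfl, Nat.find_spec h⟩)
      _ = ∑ t ∈ range (Nat.find h), (⋂ s ∈ Ioc 0 t, (E s)ᶜ).indicator 1 ω := by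
        rw [sum_congr rfl fun t ht => Set.indicator_of_mem (hsurv t (mem_range.1 ht)) _]
        simp
      _ ≤ _ := ENNReal.sum_le_tsum _
  · push Not at h
    have hsurv : ∀ t, ω ∈ ⋂ s ∈ Ioc 0 t, (E s)ᶜ := by
      simp only [Set.mem_iInter, mem_Ioc, Set.mem_compl_iff]
      exact fun t s hs => h s hs.1
    refine le_top.trans_eq ?_
    rw [tsum_congr fun t => Set.indicator_of_mem (hsurv t) (1 : Ω → ℝ≥0∞)]
    exact (ENNReal.tsum_const_eq_top_of_ne_zero one_ne_zero).symm

variable {Ω α : Type*} [MeasurableSpace Ω] [MeasurableSpace α]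

lemma lintegral_hitting_le_tsum_prod {μ : Measure Ω} {ν : Measure α} {X : ℕ → Ω → α}
    (hX : ∀ t, Measurable (X t)) (hind : iIndepFun X μ) (hlaw : ∀ t, μ.map (X t) = ν)
    {C : ℕ → Set α} (hC : ∀ t, MeasurableSet (C t)) {T : Ω → ℝ≥0∞}
    (hT : ∀ ω, T ω = sInf {τ : ℝ≥0∞ | ∃ t : ℕ, τ = t ∧ 1 ≤ t ∧ X t ω ∈ C t}) :
    ∫⁻ ω, T ω ∂μ ≤ ∑' t, ∏ s ∈ Ioc 0 t, ν (C s)ᶜ := by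
  have hmeas : ∀ t, MeasurableSet (⋂ s ∈ Ioc 0 t, (X s ⁻¹' C s)ᶜ) := fun t =>
    Finset.measurableSet_biInter _ fun s _ => (hX s (hC s)).compl
  calc ∫⁻ ω, T ω ∂μ
      ≤ ∫⁻ ω, ∑' t, (⋂ s ∈ Ioc 0 t, (X s ⁻¹' C s)ᶜ).indicator 1 ω ∂μ :=
        lintegral_mono fun ω => (hT ω).trans_le (sInf_hitting_le_tsum_indicator _ ω)
    _ = ∑' t, μ (⋂ s ∈ Ioc 0 t, X s ⁻¹' (C s)ᶜ) := by
        rw [lintegral_tsum fun t => (measurable_one.indicator (hmeas t)).aemeasurable]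
        simp_rw [lintegral_indicator_one (hmeas _), Set.preimage_compl]
    _ = ∑' t, ∏ s ∈ Ioc 0 t, ν (C s)ᶜ := by
        congr! with t
        rw [hind.meas_biInter fun s _ => ⟨(C s)ᶜ, (hC s).compl, rfl⟩]
        refine prod_congr rfl fun s _ => ?_
        rw [← hlaw s, Measure.map_apply (hX s) (hC s).compl]

lemma prod_measure_compl_eq_ofReal_survival (ν : Measure α) [IsProbabilityMeasure ν]
    {C : ℕ → Set α} (hC : ∀ t, MeasurableSet (C t)) (t : ℕ) :
    ∏ s ∈ Ioc 0 t, ν (C s)ᶜ = ENNReal.ofReal (survival (fun s => ν.real (C s)) t) := by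
  rw [survival, ENNReal.ofReal_prod_of_nonneg fun s _ => sub_nonneg.2 measureReal_le_one]
  refine prod_congr rfl fun s _ => ?_
  rw [← probReal_compl_eq_one_sub (hC s), ofReal_measureReal]

lemma one_le_sum_measureReal_add_sum_measureReal (ν : Measure α) [IsProbabilityMeasure ν]
    {ι ι' : Type*} {S : Finset ι} {S' : Finset ι'} {C : ι → Set α} {C' : ι' → Set α}
    (hcover : ∀ x, (∃ s ∈ S, x ∈ C s) ∨ ∃ s ∈ S', x ∈ C' s) :
    1 ≤ ∑ s ∈ S, ν.real (C s) + ∑ s ∈ S', ν.real (C' s) := calc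
  1 = ν.real ((⋃ s ∈ S, C s) ∪ ⋃ s ∈ S', C' s) := by
      rw [← probReal_univ (μ := ν)]
      congr 1
      exact (Set.eq_univ_of_forall fun x => by simpa using hcover x).symm
  _ ≤ _ := (measureReal_union_le _ _).trans
      (add_le_add (measureReal_biUnion_finset_le _ _) (measureReal_biUnion_finset_le _ _))

lemma one_le_sum_measureReal (ν : Measure α) [IsProbabilityMeasure ν]
    {ι : Type*} {S : Finset ι} {C : ι → Set α} (hcover : ∀ x, ∃ s ∈ S, x ∈ C s) :
    1 ≤ ∑ s ∈ S, ν.real (C s) := by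
  simpa using one_le_sum_measureReal_add_sum_measureReal ν (S' := (∅ : Finset ι)) (C' := C)
    fun x => Or.inl (hcover x)

theorem lintegral_hitting_add_lintegral_hitting_le {μ : Measure Ω} {ν : Measure α}
    [IsProbabilityMeasure ν] {X : ℕ → Ω → α} (hX : ∀ t, Measurable (X t)) (hind : iIndepFun X μ)
    (hlaw : ∀ t, μ.map (X t) = ν) {Cp Cm : ℕ → Set α} (hCp : ∀ t, MeasurableSet (Cp t))
    (hCm : ∀ t, MeasurableSet (Cm t)) {m : ℕ}
    (hwp : ∀ a x, ∃ s ∈ Ioc a (a + m), x ∈ Cp s) (hwm : ∀ a x, ∃ s ∈ Ioc a (a + m), x ∈ Cm s)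
    (hpm : ∀ r ≤ m, ∀ x, (∃ s ∈ Ioc 0 r, x ∈ Cp s) ∨ ∃ s ∈ Ioc 0 (m - r), x ∈ Cm s)
    {Tp Tm : Ω → ℝ≥0∞}
    (hTp : ∀ ω, Tp ω = sInf {τ : ℝ≥0∞ | ∃ t : ℕ, τ = t ∧ 1 ≤ t ∧ X t ω ∈ Cp t})
    (hTm : ∀ ω, Tm ω = sInf {τ : ℝ≥0∞ | ∃ t : ℕ, τ = t ∧ 1 ≤ t ∧ X t ω ∈ Cm t}) :
    ∫⁻ ω, Tp ω ∂μ + ∫⁻ ω, Tm ω ∂μ ≤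
      ENNReal.ofReal ((m + 1) * ((1 + exp (-1)) / (1 - exp (-1)))) := by
  have hu₀ : ∀ s, 0 ≤ ν.real (Cp s) := fun _ => measureReal_nonneg
  have hv₀ : ∀ s, 0 ≤ ν.real (Cm s) := fun _ => measureReal_nonneg
  have hu : ∀ s, ν.real (Cp s) ≤ 1 := fun _ => measureReal_le_one
  have hv : ∀ s, ν.real (Cm s) ≤ 1 := fun _ => measureReal_le_one
  calc _ ≤ ∑' t, ENNReal.ofReal (survival (fun s => ν.real (Cp s)) t) +
        ∑' t, ENNReal.ofReal (survival (fun s => ν.real (Cm s)) t) := add_le_add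
        ((lintegral_hitting_le_tsum_prod hX hind hlaw hCp hTp).trans_eq
          (tsum_congr (prod_measure_compl_eq_ofReal_survival ν hCp)))
        ((lintegral_hitting_le_tsum_prod hX hind hlaw hCm hTm).trans_eq
          (tsum_congr (prod_measure_compl_eq_ofReal_survival ν hCm)))
    _ ≤ _ := by
        rw [← ENNReal.tsum_add]
        refine ENNReal.tsum_le_of_sum_range_le fun N => ?_
        rw [sum_add_distrib, ← ENNReal.ofReal_sum_of_nonneg fun t _ => survival_nonneg hu t,
          ← ENNReal.ofReal_sum_of_nonneg fun t _ => survival_nonneg hv t,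
          ← ENNReal.ofReal_add (sum_nonneg fun t _ => survival_nonneg hu t)
            (sum_nonneg fun t _ => survival_nonneg hv t)]
        exact ENNReal.ofReal_le_ofReal <| sum_range_survival_add_sum_range_survival_le
          hu₀ hu hv₀ hv (fun a => one_le_sum_measureReal ν (hwp a))
          (fun a => one_le_sum_measureReal ν (hwm a))
          (fun r hr => one_le_sum_measureReal_add_sum_measureReal ν (hpm r hr)) N

end Capture

def occupied {ι V : Type*} (γ : ι → ℕ → V) (t : ℕ) : Set V := {x | ∃ j, x = γ j t}

section Cycle

open Fin.NatCast Fin.CommRing SimpleGraph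

variable {n k : ℕ} [NeZero n]

def clockwiseCops (m : ℕ) (j : Fin k) (t : ℕ) : Fin n := ((j * m + t : ℕ) : Fin n)

-- The offset `1` makes the arcs swept during the first `r` clockwise turns and the first
-- `m - r` counterclockwise turns fit together into a full arc of length `m`.
def counterclockwiseCops (m : ℕ) (j : Fin k) (t : ℕ) : Fin n :=
  ((j * m + 1 : ℕ) : Fin n) - (t : Fin n)

lemma cycleGraph_adj_add_one (hn : 2 ≤ n) (x : Fin n) : (cycleGraph n).Adj x (x + 1) := by
  rw [cycleGraph_adj', add_sub_cancel_left, Fin.val_one', Nat.mod_eq_of_lt hn]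
  exact Or.inr rfl

lemma clockwiseCops_adj (hn : 2 ≤ n) (m : ℕ) (j : Fin k) (t : ℕ) :
    (cycleGraph n).Adj (clockwiseCops m j t) (clockwiseCops m j (t + 1)) := by
  have hstep : clockwiseCops (n := n) m j (t + 1) = clockwiseCops m j t + 1 := by
    simp only [clockwiseCops]
    push_cast
    ring
  exact hstep ▸ cycleGraph_adj_add_one hn _

lemma counterclockwiseCops_adj (hn : 2 ≤ n) (m : ℕ) (j : Fin k) (t : ℕ) :
    (cycleGraph n).Adj (counterclockwiseCops m j t) (counterclockwiseCops m j (t + 1)) := by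
  have hstep : counterclockwiseCops (n := n) m j t = counterclockwiseCops m j (t + 1) + 1 := by
    simp only [counterclockwiseCops]
    push_cast
    ring
  exact hstep ▸ (cycleGraph_adj_add_one hn _).symm

lemma exists_natCast_mul_add_eq {m : ℕ} (hkm : n ≤ k * m) (y : Fin n) :
    ∃ (j : Fin k) (d : ℕ), d < m ∧ ((j * m + d : ℕ) : Fin n) = y := by
  have hm : 0 < m := Nat.pos_of_ne_zero fun h => NeZero.ne n (by simpa [h] using hkm)
  refine ⟨⟨y / m, (Nat.div_lt_iff_lt_mul hm).2 (y.isLt.trans_le hkm)⟩, y % m, Nat.mod_lt _ hm, ?_⟩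
  simp [Nat.div_add_mod']

lemma clockwiseCops_cover_window {m : ℕ} (hkm : n ≤ k * m) (a : ℕ) (x : Fin n) :
    ∃ s ∈ Ioc a (a + m), x ∈ occupied (clockwiseCops (k := k) m) s := by
  obtain ⟨j, d, hd, hy⟩ := exists_natCast_mul_add_eq hkm (x - (a + 1 : ℕ))
  refine ⟨a + 1 + d, by simp only [mem_Ioc]; omega, j, ?_⟩
  simp only [clockwiseCops]
  push_cast at hy ⊢
  linear_combination -hy

lemma counterclockwiseCops_cover_window {m : ℕ} (hkm : n ≤ k * m) (a : ℕ) (x : Fin n) :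
    ∃ s ∈ Ioc a (a + m), x ∈ occupied (counterclockwiseCops (k := k) m) s := by
  obtain ⟨j, d, hd, hy⟩ := exists_natCast_mul_add_eq hkm (x + (a + m : ℕ) - 1)
  refine ⟨a + m - d, by simp only [mem_Ioc]; omega, j, ?_⟩
  simp only [counterclockwiseCops]
  push_cast [Nat.cast_sub (show d ≤ a + m by omega)] at hy ⊢
  linear_combination -hy

lemma clockwiseCops_or_counterclockwiseCops_cover {m : ℕ} (hkm : n ≤ k * m) {r : ℕ} (hr : r ≤ m)
    (x : Fin n) :
    (∃ s ∈ Ioc 0 r, x ∈ occupied (clockwiseCops (k := k) m) s) ∨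
      ∃ s ∈ Ioc 0 (m - r), x ∈ occupied (counterclockwiseCops (k := k) m) s := by
  obtain ⟨j, d, hd, hy⟩ := exists_natCast_mul_add_eq hkm (x + (m - r : ℕ) - 1)
  push_cast [Nat.cast_sub hr] at hy
  by_cases hdr : m - r ≤ d
  · refine Or.inl ⟨d - (m - r) + 1, by simp only [mem_Ioc]; omega, j, ?_⟩
    simp only [clockwiseCops]
    push_cast [Nat.cast_sub hr, Nat.cast_sub hdr]
    linear_combination -hy
  · refine Or.inr ⟨m - r - d, by simp only [mem_Ioc]; omega, j, ?_⟩
    simp only [counterclockwiseCops]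
    push_cast [Nat.cast_sub hr, Nat.cast_sub (show d ≤ m - r by omega)]
    linear_combination -hy

end Cycle

lemma one_add_exp_neg_one_div_one_sub_lt : (1 + exp (-1)) / (1 - exp (-1)) < 2.1639536 := by
  have he := exp_neg_one_lt_d9
  rw [div_lt_iff₀ (by linarith)]
  linarith

lemma natDiv_add_one_add_mul_lt {n m : ℕ} (hn : 10 ^ 12 ≤ n) (hm_lo : 25 / 26 * √n < m)
    (hm_hi : (m : ℝ) ≤ 25 / 26 * √n + 1) :
    ((n / m + 1 : ℕ) : ℝ) + (m + 1) * ((1 + exp (-1)) / (1 - exp (-1))) / 2 < 2.08037 * √n := by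
  have hx : 10 ^ 6 ≤ √n := le_sqrt_of_sq_le (by norm_num; exact_mod_cast hn)
  have hdiv : ((n / m : ℕ) : ℝ) ≤ 26 / 25 * √n := calc
    _ ≤ (n : ℝ) / m := Nat.cast_div_le
    _ ≤ n / (25 / 26 * √n) := by gcongr
    _ = 26 / 25 * √n := by
        rw [div_eq_iff (by positivity)]
        linear_combination -mul_self_sqrt (Nat.cast_nonneg (α := ℝ) n)
  have hcost : (m + 1) * ((1 + exp (-1)) / (1 - exp (-1))) ≤ (25 / 26 * √n + 2) * 2.1639536 :=
    mul_le_mul (by linarith) one_add_exp_neg_one_div_one_sub_lt.le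
      (div_nonneg (by positivity) one_sub_exp_neg_one_pos.le)
      (by positivity)
  push_cast
  linarith

/-- For all sufficiently large `n`, the unknown gambler throttling
number of the cycle `C_n` is less than `2.08037·√n`: there are `k` cops with two
distribution-independent trajectory systems (clockwise and counterclockwise, chosen by
a fair coin) such that `k + (E[T⁺] + E[T⁻])/2 < 2.08037·√n` for every gambler
distribution `p`. -/
theorem unknown_gambler_throttling_cycle :
    ∃ N : ℕ, ∀ n : ℕ, N ≤ n →
      ∃ (k : ℕ) (_ : 0 < k) (γp γm : Fin k → ℕ → Fin n),
        (∀ j t, γp j (t + 1) = γp j t ∨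
          (SimpleGraph.cycleGraph n).Adj (γp j t) (γp j (t + 1))) ∧
        (∀ j t, γm j (t + 1) = γm j t ∨
          (SimpleGraph.cycleGraph n).Adj (γm j t) (γm j (t + 1))) ∧
        ∀ (p : PMF (Fin n)) (Ω : Type) (_ : MeasurableSpace Ω) (μ : Measure Ω)
          (_ : IsProbabilityMeasure μ) (X : ℕ → Ω → Fin n),
          (∀ t, Measurable (X t)) →
          iIndepFun X μ →
          (∀ t, μ.map (X t) = p.toMeasure) →
          ∀ Tp Tm : Ω → ℝ≥0∞,
          (∀ ω, Tp ω = sInf {τ : ℝ≥0∞ | ∃ t : ℕ, τ = t ∧ 1 ≤ t ∧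
            ∃ j : Fin k, X t ω = γp j t}) →
          (∀ ω, Tm ω = sInf {τ : ℝ≥0∞ | ∃ t : ℕ, τ = t ∧ 1 ≤ t ∧
            ∃ j : Fin k, X t ω = γm j t}) →
          (k : ℝ≥0∞) + (∫⁻ ω, Tp ω ∂μ + ∫⁻ ω, Tm ω ∂μ) / 2 <
            ENNReal.ofReal (2.08037 * Real.sqrt n) := by
  refine ⟨10 ^ 12, fun n hn => ?_⟩
  have : NeZero n := ⟨by omega⟩
  obtain ⟨m, hm_lo, hm_hi⟩ : ∃ m : ℕ, 25 / 26 * √n < m ∧ (m : ℝ) ≤ 25 / 26 * √n + 1 :=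
    ⟨⌊25 / 26 * √n⌋₊ + 1, by push_cast; exact Nat.lt_floor_add_one _,
      by push_cast; linarith [Nat.floor_le (show 0 ≤ 25 / 26 * √n by positivity)]⟩
  have hm : 0 < m := by exact_mod_cast (by positivity : (0 : ℝ) ≤ 25 / 26 * √n).trans_lt hm_lo
  have hkm : n ≤ (n / m + 1) * m := (Nat.lt_div_mul_add hm).le.trans_eq (by ring)
  refine ⟨n / m + 1, Nat.succ_pos _, clockwiseCops m, counterclockwiseCops m,
    fun j t => Or.inr (clockwiseCops_adj (by omega) m j t),
    fun j t => Or.inr (counterclockwiseCops_adj (by omega) m j t), ?_⟩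
  intro p Ω _ μ _ X hX hind hlaw Tp Tm hTp hTm
  have hE := lintegral_hitting_add_lintegral_hitting_le hX hind hlaw
    (fun _ => .of_discrete) (fun _ => .of_discrete) (clockwiseCops_cover_window hkm)
    (counterclockwiseCops_cover_window hkm)
    (fun _ hr => clockwiseCops_or_counterclockwiseCops_cover hkm hr) hTp hTm
  have hcost := natDiv_add_one_add_mul_lt hn hm_lo hm_hi
  calc _ ≤ ((n / m + 1 : ℕ) : ℝ≥0∞) +
        ENNReal.ofReal ((m + 1) * ((1 + exp (-1)) / (1 - exp (-1)))) / 2 := by gcongr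
    _ = ENNReal.ofReal (((n / m + 1 : ℕ) : ℝ) +
        (m + 1) * ((1 + exp (-1)) / (1 - exp (-1))) / 2) := by
        rw [ENNReal.ofReal_add (by positivity)
          (by have := one_sub_exp_neg_one_pos; positivity), ENNReal.ofReal_natCast,
          ENNReal.ofReal_div_of_pos two_pos, ENNReal.ofReal_ofNat]
    _ < _ := (ENNReal.ofReal_lt_ofReal_iff (by positivity)).2 hcost
end

section
/- Let V be a finite set with |V| = n ≥ 1. There exists an integer k with 1 ≤ k ≤ n such that for every probability distribution p on V the following holds: if (X_t)_{t≥1} are i.i.d. with law p and (A_t)_{t≥2} are i.i.d. uniformly random k-element subsets of V independent of (X_t), then the capture time T = min{ t ≥ 2 : X_t ∈ A_t } satisfies k + E[T] ≤ ⌈2√n⌉ + 1. -/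
open MeasureTheory ProbabilityTheory Finset
open scoped ENNReal

/-!
A uniformly random `k`-subset contains any fixed vertex with probability `k / n`. Since the cops'
sets are independent of the whole gambler sequence, conditioning on that sequence shows that the
gambler escapes on each of `j` given turns with probability `(1 - k / n) ^ j`, whatever its law.
Summing these tail probabilities gives `E[T] ≤ 1 + n / k`, and `k = ⌈√n⌉` makes
`k + n / k ≤ ⌈2√n⌉`.
-/

lemma ceil_sqrt_natCast_le (n : ℕ) : ⌈√(n : ℝ)⌉₊ ≤ n := by
  refine Nat.ceil_le.mpr ((Real.sqrt_le_left (Nat.cast_nonneg n)).mpr ?_)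
  rcases n.eq_zero_or_pos with rfl | hn
  · simp
  · have : (1 : ℝ) ≤ n := by exact_mod_cast hn
    nlinarith

lemma ceil_sqrt_mul_self_add_le (n : ℕ) :
    ⌈√(n : ℝ)⌉₊ * ⌈√(n : ℝ)⌉₊ + n ≤ ⌈2 * √(n : ℝ)⌉₊ * ⌈√(n : ℝ)⌉₊ := by
  set k := ⌈√(n : ℝ)⌉₊
  set m := ⌈2 * √(n : ℝ)⌉₊
  have hsq : √(n : ℝ) ^ 2 = n := Real.sq_sqrt n.cast_nonneg
  have hs : 0 ≤ √(n : ℝ) := Real.sqrt_nonneg _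
  have hk : √(n : ℝ) ≤ k := Nat.le_ceil _
  have hk' : (k : ℝ) < √(n : ℝ) + 1 := Nat.ceil_lt_add_one hs
  have hm : 2 * √(n : ℝ) ≤ m := Nat.le_ceil _
  have hnk : n ≤ k * k := by exact_mod_cast (show (n : ℝ) ≤ k * k by nlinarith)
  have hmk : 2 * k < m + 2 := by exact_mod_cast (show (2 * k : ℝ) < m + 2 by linarith)
  have hnm : 4 * n ≤ m * m := by exact_mod_cast (show (4 * n : ℝ) ≤ m * m by nlinarith)
  -- If `m = 2k - 1` then `4n ≤ (2k - 1)²` forces `n ≤ k² - k`.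
  rcases (show 2 * k ≤ m ∨ m + 1 = 2 * k by omega) with h | h
  · nlinarith
  · nlinarith

lemma natCast_add_div_le {k n m : ℕ} (h : k * k + n ≤ m * k) :
    (k : ℝ≥0∞) + n / k ≤ m := by
  have hkm : k ≤ m := by
    rcases k.eq_zero_or_pos with rfl | hk
    · exact Nat.zero_le m
    · exact Nat.le_of_mul_le_mul_right (by omega) hk
  have hdiv : (n : ℝ≥0∞) / k ≤ (m - k : ℕ) :=
    ENNReal.div_le_of_le_mul (by rw [← Nat.cast_mul, Nat.sub_mul]; exact_mod_cast (by omega))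
  calc (k : ℝ≥0∞) + n / k ≤ k + (m - k : ℕ) := by gcongr
    _ = m := by rw [← Nat.cast_add, Nat.add_sub_cancel' hkm]

section HittingTime

variable {Ω : Type*} (E : ℕ → Set Ω) (s : ℕ)

lemma sInf_hitTime_le_add_tsum_indicator (ω : Ω) :
    sInf {τ : ℝ≥0∞ | ∃ t : ℕ, τ = t ∧ s + 1 ≤ t ∧ ω ∈ E t} ≤
      s + ∑' j : ℕ, (⋂ t ∈ Ico (s + 1) (s + 1 + j), (E t)ᶜ).indicator 1 ω := by
  classical
  by_cases hhit : ∃ t, s + 1 ≤ t ∧ ω ∈ E t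
  · obtain ⟨hs, hE⟩ := Nat.find_spec hhit
    set t₀ := Nat.find hhit
    have hmiss : ∀ j ∈ range (t₀ - s), ω ∈ ⋂ t ∈ Ico (s + 1) (s + 1 + j), (E t)ᶜ := by
      intro j hj
      simp only [Set.mem_iInter, mem_Ico, Set.mem_compl_iff]
      intro t ht hEt
      exact Nat.find_min hhit (by simp at hj; omega) ⟨ht.1, hEt⟩
    calc sInf {τ : ℝ≥0∞ | ∃ t : ℕ, τ = t ∧ s + 1 ≤ t ∧ ω ∈ E t} ≤ t₀ :=
          sInf_le ⟨t₀, rfl, hs, hE⟩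
      _ = s + ∑ j ∈ range (t₀ - s), (⋂ t ∈ Ico (s + 1) (s + 1 + j), (E t)ᶜ).indicator 1 ω := by
          rw [sum_congr rfl fun j hj => Set.indicator_of_mem (hmiss j hj) _]
          simp only [Pi.one_apply, sum_const, card_range, nsmul_one]
          norm_cast; omega
      _ ≤ _ := by gcongr; exact ENNReal.sum_le_tsum _
  · have hmiss : ∀ j, ω ∈ ⋂ t ∈ Ico (s + 1) (s + 1 + j), (E t)ᶜ := by
      intro j
      simp only [Set.mem_iInter, mem_Ico, Set.mem_compl_iff]
      exact fun t ht hEt => hhit ⟨t, ht.1, hEt⟩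
    rw [tsum_congr fun j => Set.indicator_of_mem (hmiss j) _]
    simp

lemma lintegral_hitTime_le_add_tsum_measure [MeasurableSpace Ω] (μ : Measure Ω)
    [IsProbabilityMeasure μ] (hE : ∀ t, MeasurableSet (E t)) {T : Ω → ℝ≥0∞}
    (hT : ∀ ω, T ω = sInf {τ : ℝ≥0∞ | ∃ t : ℕ, τ = t ∧ s + 1 ≤ t ∧ ω ∈ E t}) :
    ∫⁻ ω, T ω ∂μ ≤ s + ∑' j : ℕ, μ (⋂ t ∈ Ico (s + 1) (s + 1 + j), (E t)ᶜ) := by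
  have hmeas : ∀ j, MeasurableSet (⋂ t ∈ Ico (s + 1) (s + 1 + j), (E t)ᶜ) := fun j =>
    .biInter (Set.to_countable _) fun t _ => (hE t).compl
  calc ∫⁻ ω, T ω ∂μ
      ≤ ∫⁻ ω, s + ∑' j : ℕ, (⋂ t ∈ Ico (s + 1) (s + 1 + j), (E t)ᶜ).indicator 1 ω ∂μ :=
        lintegral_mono fun ω => (hT ω).trans_le (sInf_hitTime_le_add_tsum_indicator E s ω)
    _ = s + ∑' j : ℕ, μ (⋂ t ∈ Ico (s + 1) (s + 1 + j), (E t)ᶜ) := by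
        rw [lintegral_add_left measurable_const, lintegral_const, measure_univ, mul_one,
          lintegral_tsum fun j => (measurable_one.indicator (hmeas j)).aemeasurable]
        simp only [lintegral_indicator_one (hmeas _)]

end HittingTime

lemma toMeasure_uniformOfFinset_powersetCard_mem {α : Type*} [Fintype α]
    [MeasurableSpace (Finset α)] [MeasurableSingletonClass (Finset α)] {k : ℕ} (hk : 1 ≤ k)
    (hne : (univ.powersetCard k : Finset (Finset α)).Nonempty) (v : α) :
    (PMF.uniformOfFinset (univ.powersetCard k) hne).toMeasure {a | v ∈ a} =
      k / Fintype.card α := by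
  classical
  have hkn : k ≤ Fintype.card α := by simpa using powersetCard_nonempty.mp hne
  have hcount : #{a ∈ univ.powersetCard k | {v} ⊆ a} = (Fintype.card α - 1).choose (k - 1) := by
    simpa using card_filter_powersetCard_subset {v} univ k (subset_univ _) (by simpa using hk)
  rw [PMF.toMeasure_uniformOfFinset_apply (ht := (Set.toFinite _).measurableSet)]
  simp only [Set.mem_ofPred_eq, ← singleton_subset_iff, hcount, card_powersetCard, card_univ]
  obtain ⟨n, hn⟩ : ∃ n, Fintype.card α = n + 1 := ⟨Fintype.card α - 1, by omega⟩
  obtain ⟨j, rfl⟩ : ∃ j, k = j + 1 := Nat.exists_eq_add_of_le' hk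
  rw [hn, Nat.add_sub_cancel, Nat.add_sub_cancel, ENNReal.div_eq_div_iff (by positivity)
    (by simp) (by simpa using (Nat.choose_pos (hn ▸ hkn)).ne') (by simp)]
  exact_mod_cast Nat.add_one_mul_choose_eq n j

lemma measure_biInter_prodMk_mem_eq_pow {Ω ι α β : Type*} [MeasurableSpace Ω]
    [MeasurableSpace α] [MeasurableSpace β] {μ : Measure Ω} [IsProbabilityMeasure μ]
    {X : ι → Ω → α} {A : ι → Ω → β} (hX : ∀ t, Measurable (X t)) (hA : ∀ t, Measurable (A t))
    (hA_indep : iIndepFun A μ) (hXA : IndepFun (fun ω t => X t ω) (fun ω t => A t ω) μ)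
    {C : Set (α × β)} (hC : MeasurableSet C) {r : ℝ≥0∞}
    (hr : ∀ t x, μ (A t ⁻¹' {a | (x, a) ∈ C}) = r) (S : Finset ι) :
    μ (⋂ t ∈ S, {ω | (X t ω, A t ω) ∈ C}) = r ^ #S := by
  set E : Set ((ι → α) × (ι → β)) := ⋂ t ∈ S, {z | (z.1 t, z.2 t) ∈ C}
  have hE : MeasurableSet E := .biInter (Set.to_countable _) fun t _ =>
    ((measurable_pi_apply t).comp measurable_fst).prodMk
      ((measurable_pi_apply t).comp measurable_snd) hC
  have hXs : Measurable fun ω t => X t ω := measurable_pi_lambda _ hX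
  have hAs : Measurable fun ω t => A t ω := measurable_pi_lambda _ hA
  have hfiber : ∀ x : ι → α, μ.map (fun ω t => A t ω) (Prod.mk x ⁻¹' E) = r ^ #S := by
    intro x
    rw [Measure.map_apply hAs (measurable_prodMk_left hE)]
    have : (fun ω t => A t ω) ⁻¹' (Prod.mk x ⁻¹' E) = ⋂ t ∈ S, A t ⁻¹' {a | (x t, a) ∈ C} := by
      ext ω; simp [E]
    rw [this, hA_indep.measure_inter_preimage_eq_mul S (sets := fun t => {a | (x t, a) ∈ C})
      fun t _ => measurable_prodMk_left hC]
    exact (prod_congr rfl fun t _ => hr t (x t)).trans (prod_const r)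
  calc μ (⋂ t ∈ S, {ω | (X t ω, A t ω) ∈ C})
      = μ.map (fun ω => ((fun t => X t ω), (fun t => A t ω))) E := by
        rw [Measure.map_apply (hXs.prodMk hAs) hE]; congr 1; ext ω; simp [E]
    _ = ((μ.map fun ω t => X t ω).prod (μ.map fun ω t => A t ω)) E := by
        rw [(indepFun_iff_map_prod_eq_prod_map_map hXs.aemeasurable hAs.aemeasurable).1 hXA]
    _ = r ^ #S := by
        rw [Measure.prod_apply hE]
        simp [hfiber, Measure.map_apply hXs .univ]

theorem unknown_gambler_throttling_complete_graph_general
    {V : Type*} [Fintype V]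
    [MeasurableSpace V] [MeasurableSingletonClass V]
    [MeasurableSpace (Finset V)] [MeasurableSingletonClass (Finset V)]
    (n : ℕ) (hn : Fintype.card V = n) (hn1 : 1 ≤ n) :
    ∃ (k : ℕ) (_ : 1 ≤ k) (_ : k ≤ n)
      (hne : ((Finset.univ : Finset V).powersetCard k).Nonempty),
      ∀ (p : PMF V) (Ω : Type) (_ : MeasurableSpace Ω) (μ : Measure Ω)
        (_ : IsProbabilityMeasure μ)
        (X : ℕ → Ω → V) (A : ℕ → Ω → Finset V),
        (∀ t, Measurable (X t)) → (∀ t, Measurable (A t)) →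
        iIndepFun X μ →
        (∀ t, μ.map (X t) = p.toMeasure) →
        iIndepFun A μ →
        (∀ t, μ.map (A t) =
          (PMF.uniformOfFinset ((Finset.univ : Finset V).powersetCard k) hne).toMeasure) →
        IndepFun (fun ω => fun t => X t ω) (fun ω => fun t => A t ω) μ →
        ∀ T : Ω → ℝ≥0∞,
        (∀ ω, T ω = sInf {τ : ℝ≥0∞ | ∃ t : ℕ, τ = t ∧ 2 ≤ t ∧ X t ω ∈ A t ω}) →
        (k : ℝ≥0∞) + ∫⁻ ω, T ω ∂μ ≤ (⌈2 * Real.sqrt n⌉₊ : ℝ≥0∞) + 1 := by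
  set k := ⌈√(n : ℝ)⌉₊
  have hk : 1 ≤ k := Nat.ceil_pos.mpr (Real.sqrt_pos.mpr (by exact_mod_cast hn1))
  have hkn : k ≤ n := ceil_sqrt_natCast_le n
  have hne : (univ.powersetCard k : Finset (Finset V)).Nonempty :=
    powersetCard_nonempty.mpr (by simpa [hn] using hkn)
  refine ⟨k, hk, hkn, hne, fun p Ω _ μ _ X A hX hA _ _ hA_indep hA_law hXA T hT => ?_⟩
  have hhit : ∀ t v, μ (A t ⁻¹' {a | v ∈ a}) = k / n := fun t v => by
    rw [← Measure.map_apply (hA t) (Set.toFinite _).measurableSet, hA_law t,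
      toMeasure_uniformOfFinset_powersetCard_mem hk hne, hn]
  have hmiss (S : Finset ℕ) : μ (⋂ t ∈ S, {ω | X t ω ∉ A t ω}) = (1 - k / n) ^ #S :=
    measure_biInter_prodMk_mem_eq_pow hX hA hA_indep hXA (C := {z | z.1 ∉ z.2})
      (Set.toFinite _).measurableSet (fun t v => by
        rw [← hhit t v, ← prob_compl_eq_one_sub ((hA t) (Set.toFinite _).measurableSet)]
        rfl) S
  have hgeom : ∑' j : ℕ, (1 - k / n : ℝ≥0∞) ^ j = n / k := by
    rw [ENNReal.tsum_geometric, ENNReal.sub_sub_cancel ENNReal.one_ne_top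
      (ENNReal.div_le_of_le_mul (by simpa using hkn)),
      ENNReal.inv_div (Or.inl (by simp)) (Or.inr (by simp; omega))]
  have hT_le := lintegral_hitTime_le_add_tsum_measure (fun t => {ω | X t ω ∈ A t ω}) 1 μ
    (fun t => (hX t).prodMk (hA t) (Set.toFinite {z : V × Finset V | z.1 ∈ z.2}).measurableSet) hT
  simp only [Nat.cast_one, Set.compl_ofPred, hmiss, Nat.card_Ico, Nat.add_sub_cancel_left,
    hgeom] at hT_le
  calc (k : ℝ≥0∞) + ∫⁻ ω, T ω ∂μ ≤ k + (1 + n / k) := by gcongr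
    _ = (k + n / k) + 1 := by ring
    _ ≤ ⌈2 * √(n : ℝ)⌉₊ + 1 := by gcongr; exact natCast_add_div_le (ceil_sqrt_mul_self_add_le n)

/-- The unknown gambler throttling number of the complete graph on
`n` vertices is at most `⌈2√n⌉ + 1`: for some `1 ≤ k ≤ n`, `k` cops jumping each turn
(after the first) to a uniformly random `k`-subset satisfy `k + E[T] ≤ ⌈2√n⌉ + 1`
against every gambler distribution. -/
theorem unknown_gambler_throttling_complete_graph
    {V : Type*} [Fintype V] [DecidableEq V]
    [MeasurableSpace V] [MeasurableSingletonClass V]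
    [MeasurableSpace (Finset V)] [MeasurableSingletonClass (Finset V)]
    (n : ℕ) (hn : Fintype.card V = n) (hn1 : 1 ≤ n) :
    ∃ (k : ℕ) (_ : 1 ≤ k) (_ : k ≤ n)
      (hne : ((Finset.univ : Finset V).powersetCard k).Nonempty),
      ∀ (p : PMF V) (Ω : Type) (_ : MeasurableSpace Ω) (μ : Measure Ω)
        (_ : IsProbabilityMeasure μ)
        (X : ℕ → Ω → V) (A : ℕ → Ω → Finset V),
        (∀ t, Measurable (X t)) → (∀ t, Measurable (A t)) →
        iIndepFun X μ →
        (∀ t, μ.map (X t) = p.toMeasure) →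
        iIndepFun A μ →
        (∀ t, μ.map (A t) =
          (PMF.uniformOfFinset ((Finset.univ : Finset V).powersetCard k) hne).toMeasure) →
        IndepFun (fun ω => fun t => X t ω) (fun ω => fun t => A t ω) μ →
        ∀ T : Ω → ℝ≥0∞,
        (∀ ω, T ω = sInf {τ : ℝ≥0∞ | ∃ t : ℕ, τ = t ∧ 2 ≤ t ∧ X t ω ∈ A t ω}) →
        (k : ℝ≥0∞) + ∫⁻ ω, T ω ∂μ ≤ (⌈2 * Real.sqrt n⌉₊ : ℝ≥0∞) + 1 :=
  unknown_gambler_throttling_complete_graph_general n hn hn1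
end

section
/- Let G be a simple graph on a finite vertex set V with |V| = n ≥ 2 and graph distance dist, and suppose G has a universal vertex (a vertex adjacent to every other vertex). Then there exist a positive integer k, initial cop positions c_1, …, c_k ∈ V, and response functions f_1, …, f_k : V → V such that for every probability distribution p on V and every i.i.d. sequence (X_t)_{t≥0} with law p, the capture time T = min{ t ≥ 1 : there exists j with t ≥ dist(c_j, f_j(X_0)) and X_t = f_j(X_0) } satisfies k + E[T] < ⌈2√n⌉ + 3. -/
open MeasureTheory ProbabilityTheory
open scoped ENNReal

/-!
With every cop at the universal vertex, each cop reaches its target within one step, so the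
capture time is the first return time `t ≥ 1` of the i.i.d. sequence to the target set
`S(X₀) = {f_j(X₀)}`. Conditioning on `X₀ = v`, this time is geometric with mean `1 / p(S v)`,
so `E[T] = ∑_v p(v) / p(S v)`.

Arrange `V` injectively in a `k × k` grid, `k = ⌈√n⌉`, and let cop `j` watch the `j`-th cell of
the row of `X₀`. Then `S v` contains the row of `v`, and `∑_v p(v) / p(row v)` counts the
nonempty rows, so `E[T] ≤ k` and `k + E[T] ≤ 2⌈√n⌉ ≤ ⌈2√n⌉ + 1`.
-/

lemma ENNReal.tsum_indicator_Iio_one (m : ℕ) :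
    ∑' t : ℕ, (Set.Iio m).indicator 1 t = (m : ℝ≥0∞) := by
  rw [tsum_eq_sum (s := Finset.range m) (fun t ht => by simp_all)]
  simp [Set.indicator_apply, Finset.filter_true_of_mem (fun t => Finset.mem_range.1)]

lemma sInf_natCast_eq_tsum_indicator (P : ℕ → Prop) :
    sInf {τ : ℝ≥0∞ | ∃ t : ℕ, τ = t ∧ P t} = ∑' t : ℕ, {t | ∀ s ≤ t, ¬P s}.indicator 1 t := by
  by_cases h : ∃ t, P t
  · classical
    have hfind : sInf {τ : ℝ≥0∞ | ∃ t : ℕ, τ = t ∧ P t} = Nat.find h :=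
      le_antisymm (sInf_le ⟨_, rfl, Nat.find_spec h⟩)
        (le_sInf fun _ ⟨t, hτ, ht⟩ => hτ ▸ Nat.cast_le.2 (Nat.find_min' h ht))
    have hIio : {t | ∀ s ≤ t, ¬P s} = Set.Iio (Nat.find h) := by
      ext t; simp
    rw [hfind, hIio, ENNReal.tsum_indicator_Iio_one]
  · push Not at h
    simp [h]

lemma setOf_forall_notMem_eq_iUnion {V Ω : Type*} (X : ℕ → Ω → V) (S : V → Set V) (t : ℕ) :
    {ω | ∀ s ≤ t, ¬(1 ≤ s ∧ X s ω ∈ S (X 0 ω))} =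
      ⋃ v, ⋂ i ∈ Finset.range (t + 1), X i ⁻¹' (if i = 0 then {v} else (S v)ᶜ) := by
  ext ω
  simp only [Set.mem_ofPred_eq, Set.mem_iUnion, Set.mem_iInter, Finset.mem_range, Set.mem_preimage]
  constructor
  · intro h
    refine ⟨X 0 ω, fun i hi => ?_⟩
    split_ifs with hi0
    · simp [hi0]
    · exact fun hS => h i (by omega) ⟨by omega, hS⟩
  · rintro ⟨v, hv⟩ s hst ⟨hs, hS⟩
    have h0 : X 0 ω = v := by simpa using hv 0 (by omega)
    have hs' : X s ω ∉ S v := by simpa [show s ≠ 0 by omega] using hv s (by omega)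
    exact hs' (h0 ▸ hS)

section IID

variable {V Ω : Type*} [Fintype V] [MeasurableSpace V] [MeasurableSingletonClass V]
  [MeasurableSpace Ω] {μ : Measure Ω} {p : PMF V} {X : ℕ → Ω → V}

lemma measure_setOf_forall_notMem (hXm : ∀ t, Measurable (X t))
    (hind : iIndepFun X μ) (hmap : ∀ t, μ.map (X t) = p.toMeasure) (S : V → Set V) (t : ℕ) :
    μ {ω | ∀ s ≤ t, ¬(1 ≤ s ∧ X s ω ∈ S (X 0 ω))} =
      ∑ v, p v * (1 - p.toMeasure (S v)) ^ t := by
  rw [setOf_forall_notMem_eq_iUnion, measure_iUnion, tsum_fintype]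
  · refine Finset.sum_congr rfl fun v _ => ?_
    rw [hind.meas_biInter fun i _ => ⟨_, MeasurableSet.of_discrete, rfl⟩, Finset.prod_range_succ']
    simp only [Nat.add_one_ne_zero, if_false, if_true,
      ← Measure.map_apply (hXm _) MeasurableSet.of_discrete, hmap,
      prob_compl_eq_one_sub MeasurableSet.of_discrete, Finset.prod_const, Finset.card_range,
      PMF.toMeasure_apply_singleton _ _ MeasurableSet.of_discrete]
    exact mul_comm _ _
  · intro v w hvw
    refine Set.disjoint_left.2 fun ω hv hw => hvw ?_
    simp only [Set.mem_iInter, Finset.mem_range] at hv hw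
    simpa using (hv 0 (by omega)).symm.trans (hw 0 (by omega))
  · exact fun v => Finset.measurableSet_biInter _ fun i _ => hXm i MeasurableSet.of_discrete

theorem lintegral_firstReturn_eq (hXm : ∀ t, Measurable (X t))
    (hind : iIndepFun X μ) (hmap : ∀ t, μ.map (X t) = p.toMeasure) (S : V → Set V) :
    ∫⁻ ω, sInf {τ : ℝ≥0∞ | ∃ t : ℕ, τ = t ∧ 1 ≤ t ∧ X t ω ∈ S (X 0 ω)} ∂μ =
      ∑ v, p v * (p.toMeasure (S v))⁻¹ := by
  set E : ℕ → Set Ω := fun t => {ω | ∀ s ≤ t, ¬(1 ≤ s ∧ X s ω ∈ S (X 0 ω))}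
  have hE (t : ℕ) : MeasurableSet (E t) := by
    simp only [E, setOf_forall_notMem_eq_iUnion]
    exact .iUnion fun v => Finset.measurableSet_biInter _ fun i _ => hXm i .of_discrete
  calc ∫⁻ ω, sInf {τ : ℝ≥0∞ | ∃ t : ℕ, τ = t ∧ 1 ≤ t ∧ X t ω ∈ S (X 0 ω)} ∂μ
      = ∫⁻ ω, ∑' t, (E t).indicator 1 ω ∂μ :=
        lintegral_congr fun ω => sInf_natCast_eq_tsum_indicator _
    _ = ∑' t, μ (E t) := by
        rw [lintegral_tsum fun t => (measurable_one.indicator (hE t)).aemeasurable]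
        exact tsum_congr fun t => lintegral_indicator_one (hE t)
    _ = ∑ v, ∑' t, p v * (1 - p.toMeasure (S v)) ^ t := by
        simp_rw [E, measure_setOf_forall_notMem hXm hind hmap]
        exact Summable.tsum_finsetSum fun v _ => ENNReal.summable
    _ = ∑ v, p v * (p.toMeasure (S v))⁻¹ := by
        simp_rw [ENNReal.tsum_mul_left, ENNReal.tsum_geometric,
          ENNReal.sub_sub_cancel ENNReal.one_ne_top prob_le_one]

end IID

lemma sum_mul_inv_measure_le_card {V ι : Type*} [Fintype V] [MeasurableSpace V]
    [MeasurableSingletonClass V] [Fintype ι] (p : PMF V) (b : V → ι) {S : V → Set V}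
    (hS : ∀ v, {w | b w = b v} ⊆ S v) :
    ∑ v, p v * (p.toMeasure (S v))⁻¹ ≤ Fintype.card ι := by
  classical
  have hfiber (i : ι) : p.toMeasure {w | b w = i} = ∑ v with b v = i, p v := by
    rw [← p.toMeasure_apply_finset]; simp
  calc ∑ v, p v * (p.toMeasure (S v))⁻¹
      ≤ ∑ v, p v * (p.toMeasure {w | b w = b v})⁻¹ :=
        Finset.sum_le_sum fun v _ => mul_le_mul_right (ENNReal.inv_le_inv.2 (measure_mono (hS v))) _
    _ = ∑ i, (∑ v with b v = i, p v) * (p.toMeasure {w | b w = i})⁻¹ := by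
        rw [← Finset.sum_fiberwise Finset.univ b]
        refine Finset.sum_congr rfl fun i _ => ?_
        rw [Finset.sum_mul]
        exact Finset.sum_congr rfl fun v hv => by rw [(Finset.mem_filter.1 hv).2]
    _ ≤ ∑ _i : ι, 1 :=
        Finset.sum_le_sum fun i _ => hfiber i ▸ ENNReal.mul_inv_le_one _
    _ = Fintype.card ι := by simp

lemma exists_fiber_subset_range_of_card_le {V : Type*} [Fintype V] {k : ℕ}
    (h : Fintype.card V ≤ k * k) :
    ∃ (b : V → Fin k) (f : Fin k → V → V), ∀ v, {w | b w = b v} ⊆ Set.range fun j => f j v := by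
  classical
  obtain ⟨e⟩ :=
    Function.Embedding.nonempty_of_card_le (α := V) (β := Fin k × Fin k) (by simpa using h)
  refine ⟨fun v => (e v).1, fun j v => if h : ∃ w, e w = ((e v).1, j) then h.choose else v, ?_⟩
  intro v w hw
  have hew : e w = ((e v).1, (e w).2) := Prod.ext hw rfl
  have hex : ∃ w', e w' = ((e v).1, (e w).2) := ⟨w, hew⟩
  exact ⟨(e w).2, by simp only [dif_pos hex]; exact e.injective (hex.choose_spec.trans hew.symm)⟩

lemma Nat.two_mul_ceil_le_ceil_two_mul_add_one {x : ℝ} (hx : 0 ≤ x) : 2 * ⌈x⌉₊ ≤ ⌈2 * x⌉₊ + 1 := by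
  have h : (2 * ⌈x⌉₊ : ℝ) < ⌈2 * x⌉₊ + 2 := by
    linarith [Nat.ceil_lt_add_one hx, Nat.le_ceil (2 * x)]
  have : 2 * ⌈x⌉₊ < ⌈2 * x⌉₊ + 2 := by exact_mod_cast h
  omega

lemma Nat.le_ceil_sqrt_mul_self (n : ℕ) : n ≤ ⌈√(n : ℝ)⌉₊ * ⌈√(n : ℝ)⌉₊ := by
  have h : (n : ℝ) ≤ ⌈√(n : ℝ)⌉₊ * ⌈√(n : ℝ)⌉₊ := by
    calc (n : ℝ) = √(n : ℝ) * √(n : ℝ) := (Real.mul_self_sqrt n.cast_nonneg).symm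
      _ ≤ _ := by gcongr <;> exact Nat.le_ceil _
  exact_mod_cast h

theorem observed_throttling_universal_vertex_general
    {V : Type*} [Fintype V]
    [MeasurableSpace V] [MeasurableSingletonClass V]
    (G : SimpleGraph V)
    (n : ℕ) (hn : Fintype.card V = n)
    (huniv : ∃ u : V, ∀ v : V, v ≠ u → G.Adj u v) :
    ∃ (k : ℕ) (_ : 0 < k) (c : Fin k → V) (f : Fin k → V → V),
      ∀ (p : PMF V) (Ω : Type) (_ : MeasurableSpace Ω) (μ : Measure Ω)
        (_ : IsProbabilityMeasure μ) (X : ℕ → Ω → V),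
        (∀ t, Measurable (X t)) →
        iIndepFun X μ →
        (∀ t, μ.map (X t) = p.toMeasure) →
        ∀ T : Ω → ℝ≥0∞,
        (∀ ω, T ω = sInf {τ : ℝ≥0∞ | ∃ t : ℕ, τ = t ∧ 1 ≤ t ∧
          ∃ j : Fin k, G.dist (c j) (f j (X 0 ω)) ≤ t ∧ X t ω = f j (X 0 ω)}) →
        (k : ℝ≥0∞) + ∫⁻ ω, T ω ∂μ < (⌈2 * Real.sqrt n⌉₊ : ℝ≥0∞) + 3 := by
  obtain ⟨u, hu⟩ := huniv
  have hdist (w : V) : G.dist u w ≤ 1 := by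
    rcases eq_or_ne w u with rfl | hne
    · simp
    · exact (SimpleGraph.dist_eq_one_iff_adj.2 (hu w hne)).le
  have hk : 0 < ⌈√(n : ℝ)⌉₊ := by
    have : 0 < n := hn ▸ Fintype.card_pos_iff.2 ⟨u⟩
    positivity
  obtain ⟨b, f, hbf⟩ :=
    exists_fiber_subset_range_of_card_le (hn.trans_le (Nat.le_ceil_sqrt_mul_self n))
  refine ⟨_, hk, fun _ => u, f, fun p Ω _ μ _ X hXm hind hmap T hT => ?_⟩
  set S : V → Set V := fun v => Set.range fun j => f j v
  have hT' (ω : Ω) : T ω = sInf {τ : ℝ≥0∞ | ∃ t : ℕ, τ = t ∧ 1 ≤ t ∧ X t ω ∈ S (X 0 ω)} := by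
    rw [hT]
    congr 1
    ext τ
    refine exists_congr fun t => and_congr_right fun _ => and_congr_right fun ht => ?_
    exact ⟨fun ⟨j, _, hj⟩ => ⟨j, hj.symm⟩, fun ⟨j, hj⟩ => ⟨j, (hdist _).trans ht, hj.symm⟩⟩
  rw [lintegral_congr hT', lintegral_firstReturn_eq hXm hind hmap]
  have hsum := sum_mul_inv_measure_le_card p b hbf
  have harith := Nat.two_mul_ceil_le_ceil_two_mul_add_one (Real.sqrt_nonneg n)
  rw [Fintype.card_fin] at hsum
  calc _ ≤ (⌈√(n : ℝ)⌉₊ + ⌈√(n : ℝ)⌉₊ : ℝ≥0∞) := by gcongr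
    _ < _ := by exact_mod_cast (by omega : _ < ⌈2 * √(n : ℝ)⌉₊ + 3)

/-- Every graph on `n ≥ 2` vertices with a universal vertex has
1-observed gambler throttling number less than `⌈2√n⌉ + 3`, via a distributed
Watch-Move-Wait strategy. -/
theorem observed_throttling_universal_vertex
    {V : Type*} [Fintype V] [DecidableEq V]
    [MeasurableSpace V] [MeasurableSingletonClass V]
    (G : SimpleGraph V)
    (n : ℕ) (hn : Fintype.card V = n) (hn2 : 2 ≤ n)
    (huniv : ∃ u : V, ∀ v : V, v ≠ u → G.Adj u v) :
    ∃ (k : ℕ) (_ : 0 < k) (c : Fin k → V) (f : Fin k → V → V),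
      ∀ (p : PMF V) (Ω : Type) (_ : MeasurableSpace Ω) (μ : Measure Ω)
        (_ : IsProbabilityMeasure μ) (X : ℕ → Ω → V),
        (∀ t, Measurable (X t)) →
        iIndepFun X μ →
        (∀ t, μ.map (X t) = p.toMeasure) →
        ∀ T : Ω → ℝ≥0∞,
        (∀ ω, T ω = sInf {τ : ℝ≥0∞ | ∃ t : ℕ, τ = t ∧ 1 ≤ t ∧
          ∃ j : Fin k, G.dist (c j) (f j (X 0 ω)) ≤ t ∧ X t ω = f j (X 0 ω)}) →
        (k : ℝ≥0∞) + ∫⁻ ω, T ω ∂μ < (⌈2 * Real.sqrt n⌉₊ : ℝ≥0∞) + 3 :=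
  observed_throttling_universal_vertex_general G n hn huniv
end
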